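/- arXiv:2103.08831 — 12 statements merged into one kernel-verified Lean document; each statement's English description precedes it below -/
import Mathlib

section
/- Let k ≥ 2 be even, Γ a finite abelian group, and S ⊆ Γ a symmetric set with 0 ∉ (k+1)S and R_k(S) = Γ \ (S ∪ {0}). Then any two non-adjacent distinct vertices of the Cayley graph Cay(Γ, S) are joined by a path of length exactly k. -/
/-!
If `x ≠ y` are not adjacent, then `x - y ∉ S ∪ {0}`, so `x - y = s₁ + ⋯ + s_k` with no vanishing
block `sᵢ + ⋯ + sⱼ` (`i < j`). The vertices `x - (s₁ + ⋯ + sᵢ)` then form a walk from `x` to `y`,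
and a repeated vertex would give a vanishing block; blocks of length one are harmless because
`0 ∉ (k+1)S` forces `0 ∉ S`.
-/

open Pointwise

/-- The `m`-fold sumset of `S`. -/
def foldSum {Γ : Type*} [AddCommGroup Γ] (m : ℕ) (S : Set Γ) : Set Γ :=
  {x | ∃ s : Fin m → Γ, (∀ i, s i ∈ S) ∧ ∑ i, s i = x}

/-- `R_m(S)`: sums of `m` elements of `S` admitting an ordering with no
consecutive sub-sum (of length at least two) equal to `0`. -/
def Rset {Γ : Type*} [AddCommGroup Γ] (m : ℕ) (S : Set Γ) : Set Γ :=
  {x | ∃ s : Fin m → Γ, (∀ i, s i ∈ S) ∧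
    (∀ i j : Fin m, i < j → ∑ t ∈ Finset.Icc i j, s t ≠ 0) ∧ ∑ i, s i = x}

/-- The Cayley graph of a symmetric connection set `S`. -/
def cayley {Γ : Type*} [AddCommGroup Γ] (S : Set Γ) : SimpleGraph Γ :=
  SimpleGraph.fromRel (fun g h => g - h ∈ S)

namespace SimpleGraph

theorem exists_isPath_length_eq_of_injective {V : Type*} {G : SimpleGraph V} {n : ℕ}
    (v : Fin (n + 1) → V) (hv : Function.Injective v)
    (hadj : ∀ i : Fin n, G.Adj (v i.castSucc) (v i.succ)) :
    ∃ p : G.Walk (v 0) (v (Fin.last n)), p.IsPath ∧ p.length = n := by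
  have hchain : (List.ofFn v).IsChain G.Adj :=
    List.isChain_ofFn.2 fun i hi => hadj ⟨i, by omega⟩
  have hne : List.ofFn v ≠ [] := by simp
  refine ⟨(Walk.ofSupport _ hne hchain).copy (by simp) (List.getLast_ofFn_succ v), ?_, by simp⟩
  rw [Walk.isPath_def, Walk.support_copy, Walk.support_ofSupport]
  exact List.nodup_ofFn.2 hv

end SimpleGraph

namespace Fin

open Finset

variable {M G : Type*} [AddCommMonoid M] [AddCommGroup G] {n : ℕ}

theorem partialSum_eq_sum_filter (s : Fin n → M) (i : Fin (n + 1)) :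
    partialSum s i = ∑ t with t.castSucc < i, s t := by
  induction i using Fin.induction with
  | zero => simp
  | succ i ih =>
    rw [partialSum_succ, ih]
    have : univ.filter (fun t : Fin n => t.castSucc < i.succ) =
        insert i (univ.filter fun t : Fin n => t.castSucc < i.castSucc) := by
      ext t
      simp only [mem_insert, mem_filter, mem_univ, true_and, Fin.lt_def, Fin.ext_iff,
        val_castSucc, val_succ]
      omega
    rw [this, sum_insert (by simp), add_comm]

theorem partialSum_last (s : Fin n → M) : partialSum s (last n) = ∑ t, s t := by
  simp [partialSum_eq_sum_filter, castSucc_lt_last]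

theorem partialSum_sub_partialSum_eq_sum_Icc (s : Fin n → G) {i j : Fin (n + 1)} (hij : i < j) :
    partialSum s j - partialSum s i =
      ∑ t ∈ Icc (i.castPred (ne_last_of_lt hij)) (j.pred (ne_zero_of_lt hij)), s t := by
  rw [partialSum_eq_sum_filter, partialSum_eq_sum_filter, sub_eq_iff_eq_add',
    ← sum_filter_add_sum_filter_not _ (fun t : Fin n => t.castSucc < i), filter_filter,
    filter_filter]
  congr 2 <;> ext t <;>
    simp only [mem_filter, mem_univ, true_and, mem_Icc, Fin.lt_def, Fin.le_def, val_castSucc,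
      coe_castPred, val_pred] <;>
    omega

theorem partialSum_injective (s : Fin n → G)
    (h : ∀ a b : Fin n, a ≤ b → ∑ t ∈ Icc a b, s t ≠ 0) : Function.Injective (partialSum s) := by
  refine Function.Injective.of_lt_imp_ne fun i j hij hs =>
    h (i.castPred (ne_last_of_lt hij)) (j.pred (ne_zero_of_lt hij)) ?_ ?_
  · rw [Fin.le_def, coe_castPred, val_pred]
    rw [Fin.lt_def] at hij
    omega
  · rw [← partialSum_sub_partialSum_eq_sum_Icc s hij, hs, sub_self]

end Fin

section Cayley

open Finset SimpleGraph

variable {Γ : Type*} [AddCommGroup Γ] {S : Set Γ}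

theorem cayley_adj_of_sub_mem (h0 : (0 : Γ) ∉ S) {g h : Γ} (hgh : g - h ∈ S) :
    (cayley S).Adj g h :=
  (fromRel_adj _ _ _).2 ⟨fun e => h0 (by rwa [e, sub_self] at hgh), Or.inl hgh⟩

theorem exists_isPath_length_eq_of_sub_mem_Rset {k : ℕ} (h0 : (0 : Γ) ∉ S) {x y : Γ}
    (hxy : x - y ∈ Rset k S) : ∃ p : (cayley S).Walk x y, p.IsPath ∧ p.length = k := by
  obtain ⟨s, hsS, hblock, hsum⟩ := hxy
  set v : Fin (k + 1) → Γ := fun i => x - Fin.partialSum s i with hv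
  have hblock_le : ∀ a b : Fin k, a ≤ b → ∑ t ∈ Icc a b, s t ≠ 0 := by
    intro a b hab
    rcases hab.eq_or_lt with rfl | hlt
    · rw [Icc_self, sum_singleton]
      exact fun e => h0 (e ▸ hsS a)
    · exact hblock a b hlt
  have hinj : Function.Injective v :=
    (sub_right_injective (b := x)).comp (Fin.partialSum_injective s hblock_le)
  have hstep : ∀ i : Fin k, v i.castSucc - v i.succ = s i := fun i => by
    simp only [hv, Fin.partialSum_succ]
    abel
  have hadj : ∀ i : Fin k, (cayley S).Adj (v i.castSucc) (v i.succ) := fun i =>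
    cayley_adj_of_sub_mem h0 (hstep i ▸ hsS i)
  obtain ⟨p, hp, hlen⟩ := exists_isPath_length_eq_of_injective v hinj hadj
  have hv0 : v 0 = x := by simp [hv]
  have hvk : v (Fin.last k) = y := by simp [hv, Fin.partialSum_last, hsum]
  exact ⟨p.copy hv0 hvk, by simpa using hp, by simpa using hlen⟩

end Cayley

theorem stmt2_general {Γ : Type*} [AddCommGroup Γ] (k : ℕ) (S : Set Γ)
    (h0 : (0 : Γ) ∉ foldSum (k + 1) S)
    (hR : Rset k S = (S ∪ {0})ᶜ) :
    ∀ x y : Γ, x ≠ y → ¬ (cayley S).Adj x y →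
      ∃ p : (cayley S).Walk x y, p.IsPath ∧ p.length = k := by
  intro x y hxy hadj
  have h0S : (0 : Γ) ∉ S := fun h => h0 ⟨fun _ => 0, fun _ => h, by simp⟩
  have hxyS : x - y ∉ S := fun h => hadj (cayley_adj_of_sub_mem h0S h)
  refine exists_isPath_length_eq_of_sub_mem_Rset h0S ?_
  rw [hR, Set.mem_compl_iff, Set.mem_union, Set.mem_singleton_iff, sub_eq_zero]
  tauto

theorem stmt2 {Γ : Type*} [AddCommGroup Γ] [Finite Γ] (k : ℕ) (hk : 2 ≤ k)
    (hke : Even k) (S : Set Γ) (hsymm : S = -S)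
    (h0 : (0 : Γ) ∉ foldSum (k + 1) S)
    (hR : Rset k S = (S ∪ {0})ᶜ) :
    ∀ x y : Γ, x ≠ y → ¬ (cayley S).Adj x y →
      ∃ p : (cayley S).Walk x y, p.IsPath ∧ p.length = k :=
  stmt2_general k S h0 hR
end

section
/- Let α, k ≥ 1 be integers, n = 2α(α+4)k + 2α + 5, and S = {±(2αℓ + 1) : 0 ≤ ℓ ≤ k} ⊆ ℤ/nℤ. Then 0 is not a sum of 2α + 3 elements of S. -/
set_option maxHeartbeats 1000000 in
theorem stmt4 (α k n : ℕ) (hα : 1 ≤ α) (hk : 1 ≤ k)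
    (hn : n = 2 * α * (α + 4) * k + 2 * α + 5)
    (S : Set (ZMod n))
    (hS : S = {x | ∃ ℓ ≤ k, x = ((2 * α * ℓ + 1 : ℕ) : ZMod n) ∨
      x = -((2 * α * ℓ + 1 : ℕ) : ZMod n)}) :
    (0 : ZMod n) ∉ foldSum (2 * α + 3) S := by
  classical
  intro h
  obtain ⟨s, hs, hsum⟩ := h
  have hca1 : (1:ℤ) ≤ (α:ℤ) := by exact_mod_cast hα
  have hck1 : (1:ℤ) ≤ (k:ℤ) := by exact_mod_cast hk
  have hx : ∀ i : Fin (2*α+3), ∃ (ℓ : ℕ) (ε : ℤ), ℓ ≤ k ∧ (ε = 1 ∨ ε = -1) ∧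
      s i = ((ε * (2*(α:ℤ)*ℓ + 1) : ℤ) : ZMod n) := by
    intro i
    have := hs i
    rw [hS] at this
    obtain ⟨ℓ, hℓ, hcase⟩ := this
    rcases hcase with h1 | h1
    · refine ⟨ℓ, 1, hℓ, Or.inl rfl, ?_⟩
      rw [h1]; push_cast; ring
    · refine ⟨ℓ, -1, hℓ, Or.inr rfl, ?_⟩
      rw [h1]; push_cast; ring
  choose ℓ ε hℓ hε hsval using hx
  set a : Fin (2*α+3) → ℤ := fun i => ε i * (2*(α:ℤ)*(ℓ i) + 1) with ha
  set A := ∑ i, a i with hA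
  set e := ∑ i, ε i with he
  have hnpos : 0 < n := by omega
  haveI : NeZero n := ⟨hnpos.ne'⟩
  have hN : (n:ℤ) = 2*(α:ℤ)*((α:ℤ)+4)*(k:ℤ) + 2*(α:ℤ) + 5 := by rw [hn]; push_cast; ring
  have key : ((A : ℤ) : ZMod n) = 0 := by
    rw [hA]
    push_cast
    rw [← hsum]
    exact Finset.sum_congr rfl fun i _ => (hsval i).symm
  have hdvdA : (n:ℤ) ∣ A := (ZMod.intCast_zmod_eq_zero_iff_dvd A n).mp key
  have hℓc : ∀ i, (ℓ i : ℤ) ≤ (k:ℤ) := fun i => by exact_mod_cast hℓ i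
  have hℓ0 : ∀ i, (0:ℤ) ≤ (ℓ i : ℤ) := fun i => Int.natCast_nonneg _
  have h1 : ∀ i, a i ≤ (α:ℤ)*(k:ℤ)*(ε i + 1) + ε i := by
    intro i
    rcases hε i with h | h <;> simp only [ha, h] <;> nlinarith [hℓc i, hℓ0 i]
  have h2 : ∀ i, (α:ℤ)*(k:ℤ)*(ε i - 1) + ε i ≤ a i := by
    intro i
    rcases hε i with h | h <;> simp only [ha, h] <;> nlinarith [hℓc i, hℓ0 i]
  have hε1 : ∀ i, ε i ≤ 1 := by intro i; rcases hε i with h | h <;> simp [h]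
  have hεm1 : ∀ i, -1 ≤ ε i := by intro i; rcases hε i with h | h <;> simp [h]
  set m' : ℤ := 2*(α:ℤ) + 3 with hm'
  have hcard : ∑ _i : Fin (2*α+3), (1:ℤ) = m' := by
    rw [Finset.sum_const, Finset.card_univ, Fintype.card_fin, hm']
    ring
  have hsum_lin : ∀ c d : ℤ, ∑ i, (c * ε i + d) = c * e + m' * d := by
    intro c d
    rw [Finset.sum_add_distrib, ← Finset.mul_sum, ← he, Finset.sum_const, Finset.card_univ,
      Fintype.card_fin, hm']
    ring
  have hub : A ≤ (α:ℤ)*(k:ℤ)*(e + m') + e := by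
    have hle := Finset.sum_le_sum (fun i (_ : i ∈ Finset.univ) => h1 i)
    rw [← hA] at hle
    calc A ≤ ∑ i, ((α:ℤ)*(k:ℤ)*(ε i + 1) + ε i) := hle
      _ = ∑ i, (((α:ℤ)*(k:ℤ)+1) * ε i + (α:ℤ)*(k:ℤ)) := Finset.sum_congr rfl fun i _ => by ring
      _ = ((α:ℤ)*(k:ℤ)+1) * e + m' * ((α:ℤ)*(k:ℤ)) := hsum_lin _ _
      _ = (α:ℤ)*(k:ℤ)*(e + m') + e := by ring
  have hlb : (α:ℤ)*(k:ℤ)*(e - m') + e ≤ A := by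
    have hle := Finset.sum_le_sum (fun i (_ : i ∈ Finset.univ) => h2 i)
    rw [← hA] at hle
    calc (α:ℤ)*(k:ℤ)*(e - m') + e = ((α:ℤ)*(k:ℤ)+1) * e + m' * (-((α:ℤ)*(k:ℤ))) := by ring
      _ = ∑ i, (((α:ℤ)*(k:ℤ)+1) * ε i + -((α:ℤ)*(k:ℤ))) := (hsum_lin _ _).symm
      _ = ∑ i, ((α:ℤ)*(k:ℤ)*(ε i - 1) + ε i) := Finset.sum_congr rfl fun i _ => by ring
      _ ≤ A := hle
  have heub : e ≤ m' := by
    calc e ≤ ∑ _i : Fin (2*α+3), (1:ℤ) := Finset.sum_le_sum (fun i _ => hε1 i)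
      _ = m' := hcard
  have helb : -m' ≤ e := by
    have h' : ∑ _i : Fin (2*α+3), (-1:ℤ) ≤ e := Finset.sum_le_sum (fun i _ => hεm1 i)
    have h'' : ∑ _i : Fin (2*α+3), (-1:ℤ) = -m' := by
      rw [Finset.sum_const, Finset.card_univ, Fintype.card_fin, hm']
      ring
    linarith [h', h''.symm.le, h''.le]
  have hd2 : (2*(α:ℤ)) ∣ (A - e) := by
    rw [hA, he, ← Finset.sum_sub_distrib]
    apply Finset.dvd_sum
    intro i _
    exact ⟨ε i * ℓ i, by simp only [ha]; ring⟩
  have hpar : (2:ℤ) ∣ (e - m') := by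
    have heq : e - m' = ∑ i, (ε i - 1) := by
      rw [he, Finset.sum_sub_distrib, hcard]
    rw [heq]
    apply Finset.dvd_sum
    intro i _
    rcases hε i with h | h <;> simp [h]
  have hd2' : (2:ℤ) ∣ (A - e) := dvd_trans ⟨(α:ℤ), by ring⟩ hd2
  obtain ⟨t, ht⟩ := hdvdA
  have hnposZ : (0:ℤ) < n := by exact_mod_cast hnpos
  have hak0 : (0:ℤ) ≤ (α:ℤ)*(k:ℤ) := by positivity
  have hmul1 : (α:ℤ)*(k:ℤ)*e ≤ (α:ℤ)*(k:ℤ)*m' := mul_le_mul_of_nonneg_left heub hak0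
  have hmul2 : (α:ℤ)*(k:ℤ)*(-m') ≤ (α:ℤ)*(k:ℤ)*e := mul_le_mul_of_nonneg_left helb hak0
  have hAub : A < 2*(n:ℤ) := by
    have : (α:ℤ)*(k:ℤ)*m' = 2*(α:ℤ)*(α:ℤ)*(k:ℤ) + 3*((α:ℤ)*(k:ℤ)) := by rw [hm']; ring
    nlinarith [hub, hN, hm', mul_le_mul_of_nonneg_left hck1 (by linarith : (0:ℤ) ≤ (α:ℤ))]
  have hAlb : -(2*(n:ℤ)) < A := by
    nlinarith [hlb, hN, hm', mul_le_mul_of_nonneg_left hck1 (by linarith : (0:ℤ) ≤ (α:ℤ))]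
  have ht2 : t < 2 := lt_of_mul_lt_mul_left (by rw [← ht]; linarith) hnposZ.le
  have htm2 : -2 < t := lt_of_mul_lt_mul_left
    (show (n:ℤ) * (-2) < (n:ℤ) * t by rw [← ht]; linarith) hnposZ.le
  interval_cases t
  · -- A = -n
    have hAn : A = -(n:ℤ) := by rw [ht]; ring
    have hd5 : (2*(α:ℤ)) ∣ (e + 2*(α:ℤ) + 5) := by
      have h' : (2*(α:ℤ)) ∣ (-(A - e) - 2*(α:ℤ)*(((α:ℤ)+4)*(k:ℤ))) :=
        dvd_sub (dvd_neg.mpr hd2) ⟨_, rfl⟩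
      have heq : (-(A - e) - 2*(α:ℤ)*(((α:ℤ)+4)*(k:ℤ))) = e + 2*(α:ℤ) + 5 := by
        rw [hAn, hN]; ring
      rwa [heq] at h'
    obtain ⟨j, hj⟩ := hd5
    have hj1 : 1 ≤ j := by nlinarith [helb]
    nlinarith [hlb, hN, hAn, hj, hj1,
      mul_nonneg (mul_nonneg (by linarith : (0:ℤ) ≤ (α:ℤ)) (by linarith : (0:ℤ) ≤ (k:ℤ)))
        (by linarith : (0:ℤ) ≤ j - 1)]
  · -- A = 0
    have hA0 : A = 0 := by rw [ht]; ring
    rw [hA0] at hd2'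
    obtain ⟨u, hu⟩ := hd2'
    obtain ⟨v, hv⟩ := hpar
    rw [hm'] at hv
    omega
  · -- A = n
    have hAn : A = (n:ℤ) := by rw [ht]; ring
    have hd5 : (2*(α:ℤ)) ∣ (2*(α:ℤ) + 5 - e) := by
      have h' : (2*(α:ℤ)) ∣ ((A - e) - 2*(α:ℤ)*(((α:ℤ)+4)*(k:ℤ))) := dvd_sub hd2 ⟨_, rfl⟩
      have heq : (A - e) - 2*(α:ℤ)*(((α:ℤ)+4)*(k:ℤ)) = 2*(α:ℤ) + 5 - e := by
        rw [hAn, hN]; ring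
      rwa [heq] at h'
    obtain ⟨j, hj⟩ := hd5
    have hj1 : 1 ≤ j := by nlinarith [heub]
    nlinarith [hub, hN, hAn, hj, hj1,
      mul_nonneg (mul_nonneg (by linarith : (0:ℤ) ≤ (α:ℤ)) (by linarith : (0:ℤ) ≤ (k:ℤ)))
        (by linarith : (0:ℤ) ≤ j - 1)]
end

section
/- Let α, k ≥ 1 be integers, n = 2α(α+4)k + 2α + 5, and S = {±(2αℓ+1) : 0 ≤ ℓ ≤ k} ⊆ ℤ/nℤ. Then the (2α+2)-fold sumset (2α+2)S equals ℤ/nℤ \ S. -/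
lemma foldSum_neg {Γ : Type*} [AddCommGroup Γ] (m : ℕ) (S : Set Γ)
    (hsym : ∀ z ∈ S, -z ∈ S) (x : Γ) (hx : x ∈ foldSum m S) : -x ∈ foldSum m S := by
  obtain ⟨s, hmem, hsum⟩ := hx
  exact ⟨fun i => -(s i), fun i => hsym _ (hmem i),
    by rw [Finset.sum_neg_distrib, hsum]⟩

lemma coreContr1 (A K P Q t L σ : ℤ) (hA : 1 ≤ A) (hK : 1 ≤ K)
    (hσ : σ = 1 ∨ σ = -1)
    (hP : 0 ≤ P) (hQ : 0 ≤ Q) (hPQ : P + Q = 2*A+2)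
    (ht1 : -(Q*K) ≤ t) (ht2 : t ≤ P*K)
    (hL1 : 0 ≤ L) (hL2 : L ≤ K)
    (heq : 2*A*t + P - Q - σ*(2*A*L+1) = 2*A*(A+4)*K + 2*A + 5) : False := by
  set Y : ℤ := t - σ*L - (A+4)*K - 1 with hY
  have hkey : 2*A*Y = σ + 5 + Q - P := by
    rcases hσ with h | h <;> subst h <;> ring_nf <;> ring_nf at heq <;> linarith
  rcases le_or_gt Y (-1) with hy | hy
  · have h1 : 2*A*Y ≤ 2*A*(-1) := by
      have := mul_le_mul_of_nonneg_left hy (by linarith : (0:ℤ) ≤ 2*A)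
      linarith
    rcases hσ with h | h <;> subst h <;> nlinarith
  · have hy0 : 0 ≤ Y := by linarith
    have h1 : 0 ≤ 2*A*Y := by positivity
    rcases hσ with h | h <;> subst h
    · have hP6 : P - Q ≤ 6 := by linarith
      have hPle : P ≤ A + 4 := by linarith
      have hPK : P*K ≤ (A+4)*K := mul_le_mul_of_nonneg_right hPle (by linarith)
      have htlb : t = L + (A+4)*K + 1 + Y := by linarith [hY]
      linarith
    · have hP6 : P - Q ≤ 4 := by linarith
      have hPle : P ≤ A + 3 := by linarith
      have hPK : P*K ≤ (A+3)*K := mul_le_mul_of_nonneg_right hPle (by linarith)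
      have htlb : t = -L + (A+4)*K + 1 + Y := by linarith [hY]
      nlinarith

lemma coreContr (A K P Q t L σ : ℤ) (hA : 1 ≤ A) (hK : 1 ≤ K)
    (hσ : σ = 1 ∨ σ = -1)
    (hP : 0 ≤ P) (hQ : 0 ≤ Q) (hPQ : P + Q = 2*A+2)
    (ht1 : -(Q*K) ≤ t) (ht2 : t ≤ P*K)
    (hL1 : 0 ≤ L) (hL2 : L ≤ K)
    (hdvd : (2*A*(A+4)*K + 2*A + 5) ∣ (2*A*t + P - Q - σ*(2*A*L+1))) : False := by
  obtain ⟨c, hc⟩ := hdvd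
  have hNpos : (0:ℤ) < 2*A*(A+4)*K + 2*A + 5 := by
    nlinarith [mul_nonneg (mul_nonneg (by linarith : (0:ℤ) ≤ 2*A)
      (by linarith : (0:ℤ) ≤ A+4)) (by linarith : (0:ℤ) ≤ K)]
  have hub : 2*A*t + P - Q - σ*(2*A*L+1) < 2*(2*A*(A+4)*K + 2*A + 5) := by
    have h1 : 2*A*t ≤ 2*A*(P*K) := by
      have := mul_le_mul_of_nonneg_left ht2 (by linarith : (0:ℤ) ≤ 2*A); linarith
    have h2 : P*K ≤ (2*A+2)*K := by
      have hple : P ≤ 2*A+2 := by linarith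
      exact mul_le_mul_of_nonneg_right hple (by linarith)
    have h3 : -(σ*(2*A*L+1)) ≤ 2*A*K+1 := by
      rcases hσ with h | h <;> subst h <;> nlinarith
    nlinarith
  have hlb : -(2*(2*A*(A+4)*K + 2*A + 5)) < 2*A*t + P - Q - σ*(2*A*L+1) := by
    have h1 : 2*A*(-(Q*K)) ≤ 2*A*t := by
      have := mul_le_mul_of_nonneg_left ht1 (by linarith : (0:ℤ) ≤ 2*A); linarith
    have h2 : Q*K ≤ (2*A+2)*K := by
      have hqle : Q ≤ 2*A+2 := by linarith
      exact mul_le_mul_of_nonneg_right hqle (by linarith)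
    have h3 : σ*(2*A*L+1) ≤ 2*A*K+1 := by
      rcases hσ with h | h <;> subst h <;> nlinarith
    nlinarith
  rw [hc] at hub hlb
  have hc1 : c ≤ 1 := by nlinarith
  have hc2 : -1 ≤ c := by nlinarith
  interval_cases c
  · refine coreContr1 A K Q P (-t) L (-σ) hA hK ?_ hQ hP (by linarith) (by linarith)
      (by linarith) hL1 hL2 (by linear_combination -hc)
    rcases hσ with h | h <;> subst h <;> simp
  · rcases hσ with h | h <;> subst h
    · have h2 : 2*(A*t) - 2*(A*L) = 1 + Q - P := by linear_combination hc
      omega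
    · have h2 : 2*(A*t) + 2*(A*L) = -1 + Q - P := by linear_combination hc
      omega
  · exact coreContr1 A K P Q t L σ hA hK hσ hP hQ hPQ ht1 ht2 hL1 hL2
      (by linear_combination hc)

lemma decompFold (n α k : ℕ) : ∀ (m : ℕ) (s : Fin m → ZMod n),
    (∀ i, ∃ ℓ ≤ k, s i = ((2*α*ℓ+1 : ℕ) : ZMod n) ∨ s i = -((2*α*ℓ+1 : ℕ) : ZMod n)) →
    ∃ p q : ℕ, ∃ t : ℤ, p + q = m ∧ -((q:ℤ)*k) ≤ t ∧ t ≤ (p:ℤ)*k ∧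
      ∑ i, s i = ((2*(α:ℤ)*t + p - q : ℤ) : ZMod n) := by
  intro m
  induction m with
  | zero =>
    intro s _
    exact ⟨0, 0, 0, rfl, by simp, by simp, by simp⟩
  | succ m ih =>
    intro s hs
    obtain ⟨p, q, t, hpq, ht1, ht2, hsum⟩ := ih (fun i => s i.succ) (fun i => hs i.succ)
    obtain ⟨ℓ, hℓ, h | h⟩ := hs 0
    · refine ⟨p+1, q, t + ℓ, by omega, by nlinarith [Int.ofNat_nonneg ℓ], ?_, ?_⟩
      · push_cast
        have : (ℓ:ℤ) ≤ k := by exact_mod_cast hℓ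
        nlinarith
      · rw [Fin.sum_univ_succ, hsum, h]
        push_cast
        ring
    · refine ⟨p, q+1, t - ℓ, by omega, ?_, ?_, ?_⟩
      · push_cast
        have : (ℓ:ℤ) ≤ k := by exact_mod_cast hℓ
        nlinarith
      · have : (0:ℤ) ≤ ℓ := Int.ofNat_nonneg ℓ
        nlinarith
      · rw [Fin.sum_univ_succ, hsum, h]
        push_cast
        ring

lemma buildPos (n α k : ℕ) : ∀ (p T : ℕ), T ≤ p * k →
    ∃ s : Fin p → ZMod n, (∀ i, ∃ ℓ ≤ k, s i = ((2*α*ℓ+1:ℕ) : ZMod n)) ∧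
      ∑ i, s i = ((2*α*T + p : ℕ) : ZMod n) := by
  intro p
  induction p with
  | zero =>
    intro T hT
    simp only [Nat.zero_mul, Nat.le_zero] at hT
    subst hT
    exact ⟨Fin.elim0, fun i => i.elim0, by simp⟩
  | succ p ih =>
    intro T hT
    have hT0 : T ≤ p * k + k := by
      calc T ≤ (p+1) * k := hT
      _ = p * k + k := by ring
    have hT' : T - min T k ≤ p * k := by omega
    obtain ⟨s, hmem, hsum⟩ := ih (T - min T k) hT'
    refine ⟨Fin.cons ((2*α*(min T k)+1 : ℕ) : ZMod n) s, ?_, ?_⟩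
    · intro i
      refine Fin.cases ?_ ?_ i
      · exact ⟨min T k, min_le_right _ _, by simp⟩
      · intro j
        simpa using hmem j
    · rw [Fin.sum_cons, hsum]
      have h2 : 2*α*(T - min T k) + 2*α*(min T k) = 2*α*T := by
        rw [← Nat.mul_add, Nat.sub_add_cancel (min_le_left T k)]
      have hrec : 2*α*(min T k) + 1 + (2*α*(T - min T k) + p) = 2*α*T + (p+1) := by
        omega
      rw [← hrec]
      push_cast
      ring

lemma buildMem (n α k : ℕ) (S : Set (ZMod n))
    (hS : ∀ ℓ ≤ k, ((2*α*ℓ+1:ℕ):ZMod n) ∈ S ∧ -((2*α*ℓ+1:ℕ):ZMod n) ∈ S)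
    (p q : ℕ) (t : ℤ) (ht1 : -((q:ℤ)*k) ≤ t) (ht2 : t ≤ (p:ℤ)*k) :
    ((2*(α:ℤ)*t + p - q : ℤ) : ZMod n) ∈ foldSum (p+q) S := by
  obtain ⟨Tp, Tm, hTp, hTm, hT⟩ : ∃ Tp Tm : ℕ, Tp ≤ p*k ∧ Tm ≤ q*k ∧ (Tp:ℤ) - Tm = t := by
    rcases le_or_gt 0 t with h | h
    · refine ⟨t.toNat, 0, ?_, Nat.zero_le _, by simp [Int.toNat_of_nonneg h]⟩
      rw [← Nat.cast_le (α := ℤ)]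
      rw [Int.toNat_of_nonneg h]
      exact_mod_cast ht2
    · refine ⟨0, (-t).toNat, Nat.zero_le _, ?_,
        by rw [Int.toNat_of_nonneg (by linarith : (0:ℤ) ≤ -t)]; push_cast; ring⟩
      rw [← Nat.cast_le (α := ℤ)]
      rw [Int.toNat_of_nonneg (by linarith : (0:ℤ) ≤ -t)]
      push_cast
      linarith
  obtain ⟨s₁, hs₁mem, hs₁⟩ := buildPos n α k p Tp hTp
  obtain ⟨s₂, hs₂mem, hs₂⟩ := buildPos n α k q Tm hTm
  refine ⟨Fin.append s₁ (fun j => - s₂ j), ?_, ?_⟩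
  · intro i
    refine Fin.addCases (motive := fun i => Fin.append s₁ (fun j => - s₂ j) i ∈ S) ?_ ?_ i
    · intro j
      rw [Fin.append_left]
      obtain ⟨ℓ, hℓ, h⟩ := hs₁mem j
      rw [h]
      exact (hS ℓ hℓ).1
    · intro j
      rw [Fin.append_right]
      obtain ⟨ℓ, hℓ, h⟩ := hs₂mem j
      rw [h]
      exact (hS ℓ hℓ).2
  · rw [Fin.sum_univ_add]
    simp only [Fin.append_left, Fin.append_right]
    rw [hs₁, Finset.sum_neg_distrib, hs₂]
    rw [← hT]
    push_cast
    ring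

set_option maxHeartbeats 2000000 in
lemma cover (α k R : ℕ) (hα : 1 ≤ α) (hk : 1 ≤ k)
    (hR : R ≤ 2*α*(α+4)*k + 2*α + 4) (hEven : 2 ∣ R)
    (hexc : ∀ ℓ ≤ k, R + 2*α*ℓ ≠ 2*α*(α+4)*k + 2*α + 4) :
    ∃ p q : ℕ, ∃ t : ℤ, p + q = 2*α+2 ∧ -((q:ℤ)*k) ≤ t ∧ t ≤ (p:ℤ)*k ∧
      (R:ℤ) = 2*(α:ℤ)*t + p - q := by
  set u := R / (2*α) with hu
  set v := R % (2*α) with hv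
  have hdm : 2*α*u + v = R := Nat.div_add_mod R (2*α)
  have hvlt : v < 2*α := Nat.mod_lt _ (by omega)
  have hv2 : 2 ∣ v := by
    have h1 : 2*α*u = 2*(α*u) := by ring
    omega
  obtain ⟨d, hd⟩ := hv2
  have hdα : d < α := by omega
  have hdmZ : 2*(α:ℤ)*u + 2*d = (R:ℤ) := by
    push_cast [← hdm, hd]; ring
  have hRZ : (R:ℤ) ≤ 2*(α:ℤ)*((α:ℤ)+4)*k + 2*α + 4 := by exact_mod_cast hR
  have haZ : (1:ℤ) ≤ (α:ℤ) := by exact_mod_cast hα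
  have hkZ : (1:ℤ) ≤ (k:ℤ) := by exact_mod_cast hk
  have hdZ : (d:ℤ) < (α:ℤ) := by exact_mod_cast hdα
  have hexcZ : ∀ L : ℕ, L ≤ k → (R:ℤ) + 2*(α:ℤ)*L ≠ 2*(α:ℤ)*((α:ℤ)+4)*k + 2*α + 4 := by
    intro L hL hEq
    exact hexc L hL (by exact_mod_cast hEq)
  rcases le_or_gt u ((α+1+d)*k) with hc1 | hc1
  · refine ⟨α+1+d, α+1-d, (u:ℤ), by omega, ?_, ?_, ?_⟩
    · have h1 : (0:ℤ) ≤ (u:ℤ) := by positivity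
      have h2 : (0:ℤ) ≤ ((α+1-d : ℕ):ℤ)*k := by positivity
      linarith
    · have := (Nat.cast_le (α := ℤ)).mpr hc1
      push_cast at this ⊢
      linarith
    · have hcast : ((α+1-d : ℕ):ℤ) = (α:ℤ)+1-d := by
        have : d ≤ α + 1 := by omega
        push_cast [Nat.cast_sub this]
        ring
      rw [hcast]
      push_cast
      linarith
  · have hcZ : ((α:ℤ)+1+d)*k + 1 ≤ (u:ℤ) := by exact_mod_cast hc1
    have hd2 : d ≤ 2 := by
      by_contra hcon
      push_neg at hcon
      have h3 : (3:ℤ) ≤ (d:ℤ) := by exact_mod_cast hcon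
      nlinarith [mul_nonneg (by linarith : (0:ℤ) ≤ (d:ℤ)-3) (by linarith : (0:ℤ) ≤ (k:ℤ)),
        mul_le_mul_of_nonneg_left hcZ (by linarith : (0:ℤ) ≤ 2*(α:ℤ))]
    interval_cases d
    · -- d = 0
      rcases le_or_gt u ((2*α+1)*k+1) with hc2 | hc2
      · refine ⟨2*α+1, 1, (u:ℤ)-1, by omega, ?_, ?_, ?_⟩
        · have : (0:ℤ) ≤ (u:ℤ) := by positivity
          push_cast
          linarith
        · have := (Nat.cast_le (α := ℤ)).mpr hc2
          push_cast at this ⊢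
          linarith
        · push_cast
          linarith
      · have hc2Z : ((2*(α:ℤ)+1)*k + 2) ≤ (u:ℤ) := by exact_mod_cast hc2
        rcases lt_or_ge α 3 with hα3 | hα3
        · interval_cases α
          · -- α = 1
            rcases le_or_gt u (4*k+2) with hc3 | hc3
            · refine ⟨4, 0, (u:ℤ)-2, by omega, ?_, ?_, ?_⟩
              · push_cast; linarith
              · have := (Nat.cast_le (α := ℤ)).mpr hc3
                push_cast at this ⊢; linarith
              · push_cast; linarith
            · exfalso
              have hc3Z : (4*(k:ℤ)+3) ≤ (u:ℤ) := by exact_mod_cast hc3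
              have hub : (u:ℤ) ≤ 5*k+3 := by linarith
              obtain ⟨L, hLk, hLu⟩ : ∃ L : ℕ, L ≤ k ∧ (L:ℤ) = 5*(k:ℤ)+3-u := by
                refine ⟨5*k+3-u, ?_, ?_⟩
                · have : u ≤ 5*k+3 := by exact_mod_cast hub
                  omega
                · have : u ≤ 5*k+3 := by exact_mod_cast hub
                  push_cast [Nat.cast_sub this]
                  ring
              refine hexcZ L hLk ?_
              rw [hLu]
              push_cast
              linarith
          · -- α = 2
            exfalso
            have hub : (u:ℤ) ≤ 6*k+2 := by nlinarith
            obtain ⟨L, hLk, hLu⟩ : ∃ L : ℕ, L ≤ k ∧ (L:ℤ) = 6*(k:ℤ)+2-u := by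
              refine ⟨6*k+2-u, ?_, ?_⟩
              · have h6 : u ≤ 6*k+2 := by exact_mod_cast hub
                have h5 : 5*k+2 ≤ u := by exact_mod_cast hc2Z
                omega
              · have : u ≤ 6*k+2 := by exact_mod_cast hub
                push_cast [Nat.cast_sub this]
                ring
            refine hexcZ L hLk ?_
            rw [hLu]
            push_cast
            linarith
        · exfalso
          have h3 : (3:ℤ) ≤ (α:ℤ) := by exact_mod_cast hα3
          nlinarith [mul_le_mul_of_nonneg_left hc2Z (by linarith : (0:ℤ) ≤ 2*(α:ℤ)),
            mul_nonneg (by linarith : (0:ℤ) ≤ (α:ℤ)-3) (by linarith : (0:ℤ) ≤ (k:ℤ))]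
    · -- d = 1, so α ≥ 2
      have hα2 : (2:ℤ) ≤ (α:ℤ) := by
        have : 2 ≤ α := by omega
        exact_mod_cast this
      have hposk : (0:ℤ) ≤ ((α:ℤ)+1+1)*k := by positivity
      have hub : (u:ℤ) ≤ ((α:ℤ)+4)*k+1 := by
        by_contra hcon
        push_neg at hcon
        have h1 : 2*(α:ℤ)*(((α:ℤ)+4)*k+2) ≤ 2*(α:ℤ)*u :=
          mul_le_mul_of_nonneg_left (by linarith) (by linarith)
        nlinarith
      refine ⟨2*α+2, 0, (u:ℤ)-1, by omega, ?_, ?_, ?_⟩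
      · push_cast
        linarith
      · have h2 : (0:ℤ) ≤ ((α:ℤ)-2)*k :=
          mul_nonneg (by linarith) (by linarith)
        push_cast
        linarith
      · push_cast
        linarith
    · -- d = 2 : excluded zone, contradiction
      exfalso
      have hub : (u:ℤ) ≤ ((α:ℤ)+4)*k+1 := by nlinarith
      obtain ⟨L, hLk, hLu⟩ : ∃ L : ℕ, L ≤ k ∧ (L:ℤ) = ((α:ℤ)+4)*(k:ℤ)+1-u := by
        refine ⟨(α+4)*k+1-u, ?_, ?_⟩
        · have h1 : u ≤ (α+4)*k+1 := by exact_mod_cast hub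
          have h2 : (α+3)*k+1 ≤ u := by
            have : ((α:ℤ)+3)*k+1 ≤ (u:ℤ) := by linarith
            exact_mod_cast this
          have h3 : (α+4)*k = (α+3)*k + k := by ring
          omega
        · have : u ≤ (α+4)*k+1 := by exact_mod_cast hub
          push_cast [Nat.cast_sub this]
          ring
      refine hexcZ L hLk ?_
      rw [hLu]
      push_cast
      linarith

lemma revEven (α k n : ℕ) (hα : 1 ≤ α) (hk : 1 ≤ k)
    (hn : n = 2 * α * (α + 4) * k + 2 * α + 5)
    (S : Set (ZMod n))
    (hS : S = {x | ∃ ℓ ≤ k, x = ((2 * α * ℓ + 1 : ℕ) : ZMod n) ∨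
      x = -((2 * α * ℓ + 1 : ℕ) : ZMod n)})
    (x : ZMod n) (hval : 2 ∣ x.val) (hx : x ∉ S) : x ∈ foldSum (2*α+2) S := by
  haveI : NeZero n := ⟨by omega⟩
  have hxR : ((x.val : ℕ) : ZMod n) = x := by
    rw [ZMod.natCast_val, ZMod.cast_id]
  have hRlt : x.val < n := ZMod.val_lt x
  have hexc : ∀ ℓ ≤ k, x.val + 2*α*ℓ ≠ 2*α*(α+4)*k + 2*α + 4 := by
    intro ℓ hℓ hEq
    apply hx
    rw [hS]
    refine ⟨ℓ, hℓ, Or.inr ?_⟩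
    have hzero : ((x.val + (2*α*ℓ+1) : ℕ) : ZMod n) = 0 := by
      have hsum : x.val + (2*α*ℓ+1) = n := by omega
      rw [hsum, ZMod.natCast_self]
    rw [← hxR]
    push_cast at hzero ⊢
    linear_combination hzero
  obtain ⟨p, q, t, hpq, ht1, ht2, hRe⟩ :=
    cover α k x.val hα hk (by omega) hval hexc
  have hSmem : ∀ ℓ ≤ k, ((2*α*ℓ+1:ℕ):ZMod n) ∈ S ∧ -((2*α*ℓ+1:ℕ):ZMod n) ∈ S := by
    intro ℓ hℓ
    rw [hS]
    exact ⟨⟨ℓ, hℓ, Or.inl rfl⟩, ⟨ℓ, hℓ, Or.inr rfl⟩⟩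
  have hmem := buildMem n α k S hSmem p q t ht1 ht2
  rw [hpq] at hmem
  have hxeq : ((x.val : ℕ) : ZMod n) = ((2*(α:ℤ)*t + p - q : ℤ) : ZMod n) := by
    rw [← hRe]
    norm_cast
  rw [← hxR, hxeq]
  exact hmem

theorem stmt5 (α k n : ℕ) (hα : 1 ≤ α) (hk : 1 ≤ k)
    (hn : n = 2 * α * (α + 4) * k + 2 * α + 5)
    (S : Set (ZMod n))
    (hS : S = {x | ∃ ℓ ≤ k, x = ((2 * α * ℓ + 1 : ℕ) : ZMod n) ∨
      x = -((2 * α * ℓ + 1 : ℕ) : ZMod n)}) :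
    foldSum (2 * α + 2) S = Sᶜ := by
  haveI : NeZero n := ⟨by omega⟩
  have hAZ : (1:ℤ) ≤ (α:ℤ) := by exact_mod_cast hα
  have hKZ : (1:ℤ) ≤ (k:ℤ) := by exact_mod_cast hk
  have hsym : ∀ z ∈ S, -z ∈ S := by
    intro z hz
    rw [hS] at hz ⊢
    obtain ⟨ℓ, hℓ, h | h⟩ := hz
    · exact ⟨ℓ, hℓ, Or.inr (by rw [h])⟩
    · exact ⟨ℓ, hℓ, Or.inl (by rw [h, neg_neg])⟩
  ext x
  simp only [Set.mem_compl_iff]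
  constructor
  · -- forward: sums avoid S
    rintro ⟨s, hmem, hsum⟩ hxS
    have hs : ∀ i, ∃ ℓ ≤ k, s i = ((2*α*ℓ+1 : ℕ) : ZMod n) ∨
        s i = -((2*α*ℓ+1 : ℕ) : ZMod n) := by
      intro i
      have := hmem i
      rw [hS] at this
      exact this
    obtain ⟨p, q, t, hpq, ht1, ht2, hsum2⟩ := decompFold n α k (2*α+2) s hs
    rw [hS] at hxS
    obtain ⟨ℓ, hℓ, h | h⟩ := hxS
    · -- x = +(2αℓ+1)
      have hzero : ((2*(α:ℤ)*t + p - q - 1*(2*(α:ℤ)*ℓ+1) : ℤ) : ZMod n) = 0 := by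
        have h1 : ((2*(α:ℤ)*t + p - q : ℤ) : ZMod n) = ((2*α*ℓ+1 : ℕ) : ZMod n) := by
          rw [← hsum2, hsum, h]
        push_cast at h1 ⊢
        linear_combination h1
      rw [ZMod.intCast_zmod_eq_zero_iff_dvd] at hzero
      refine coreContr (α:ℤ) (k:ℤ) p q t ℓ 1 hAZ hKZ (Or.inl rfl)
        (by positivity) (by positivity) ?_ ht1 ht2 (by positivity)
        (by exact_mod_cast hℓ) ?_
      · have : ((p + q : ℕ) : ℤ) = ((2*α+2 : ℕ) : ℤ) := by rw [hpq]
        push_cast at this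
        linarith
      · have hncast : ((n:ℕ):ℤ) = 2*(α:ℤ)*((α:ℤ)+4)*k + 2*α + 5 := by
          rw [hn]; push_cast; ring
        rwa [hncast] at hzero
    · have hzero : ((2*(α:ℤ)*t + p - q - (-1)*(2*(α:ℤ)*ℓ+1) : ℤ) : ZMod n) = 0 := by
        have h1 : ((2*(α:ℤ)*t + p - q : ℤ) : ZMod n) = -((2*α*ℓ+1 : ℕ) : ZMod n) := by
          rw [← hsum2, hsum, h]
        push_cast at h1 ⊢
        linear_combination h1
      rw [ZMod.intCast_zmod_eq_zero_iff_dvd] at hzero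
      refine coreContr (α:ℤ) (k:ℤ) p q t ℓ (-1) hAZ hKZ (Or.inr rfl)
        (by positivity) (by positivity) ?_ ht1 ht2 (by positivity)
        (by exact_mod_cast hℓ) ?_
      · have : ((p + q : ℕ) : ℤ) = ((2*α+2 : ℕ) : ℤ) := by rw [hpq]
        push_cast at this
        linarith
      · have hncast : ((n:ℕ):ℤ) = 2*(α:ℤ)*((α:ℤ)+4)*k + 2*α + 5 := by
          rw [hn]; push_cast; ring
        rwa [hncast] at hzero
  · -- reverse
    intro hx
    rcases Nat.even_or_odd x.val with he | ho
    · exact revEven α k n hα hk hn S hS x he.two_dvd hx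
    · have hx0 : x ≠ 0 := by
        intro h0
        rw [h0] at ho
        simp [ZMod.val_zero] at ho
      have hnodd : ¬ 2 ∣ n := by
        have h2 : 2*α*(α+4)*k = 2*(α*(α+4)*k) := by ring
        omega
      have hnegval : (-x).val = n - x.val := by
        rw [ZMod.neg_val, if_neg hx0]
      have hneg2 : 2 ∣ (-x).val := by
        have := ZMod.val_lt x
        obtain ⟨w, hw⟩ := ho
        omega
      have hnegS : -x ∉ S := fun hmem => hx (by
        have := hsym _ hmem
        rwa [neg_neg] at this)
      have := revEven α k n hα hk hn S hS (-x) hneg2 hnegS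
      have h2 := foldSum_neg (2*α+2) S hsym (-x) this
      rwa [neg_neg] at h2
end

section
/- Let α, k ≥ 1 be integers, n = 2α(α+4)k + 2α + 5, and S = {±(2αℓ+1) : 0 ≤ ℓ ≤ k} ⊆ ℤ/nℤ. Then R_{2α+2}(S) = ℤ/nℤ \ (S ∪ {0}). -/
section Walk

variable {Γ : Type*} [AddCommGroup Γ] {m : ℕ} {S : Set Γ}

theorem zero_notMem_Rset (hm : 2 ≤ m) : (0 : Γ) ∉ Rset m S := by
  rintro ⟨s, -, hsub, hsum⟩
  have huniv : Finset.Icc (⟨0, by omega⟩ : Fin m) ⟨m - 1, by omega⟩ = Finset.univ := by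
    ext i
    simp only [Finset.mem_Icc, Finset.mem_univ, iff_true, Fin.le_def]
    omega
  exact hsub _ _ (Fin.mk_lt_mk.mpr (by omega)) (huniv ▸ hsum)

theorem neg_mem_Rset (hS : ∀ x ∈ S, -x ∈ S) {x : Γ} (hx : x ∈ Rset m S) : -x ∈ Rset m S := by
  obtain ⟨s, hs, hsub, rfl⟩ := hx
  refine ⟨fun i => -s i, fun i => hS _ (hs i), fun i j hij => ?_, Finset.sum_neg_distrib ..⟩
  rw [Finset.sum_neg_distrib, neg_ne_zero]
  exact hsub i j hij

theorem mem_Rset_of_injOn (w : ℕ → Γ) (hw₀ : w 0 = 0) (hstep : ∀ i < m, w (i + 1) - w i ∈ S)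
    (hinj : Set.InjOn w (Set.Iic m)) : w m ∈ Rset m S := by
  have hIcc (i j : Fin m) : ∑ t ∈ Finset.Icc i j, (w (t + 1) - w t) =
      ∑ t ∈ Finset.Icc (i : ℕ) j, (w (t + 1) - w t) := by
    rw [← Fin.map_valEmbedding_Icc, Finset.sum_map]
    rfl
  refine ⟨fun i => w (i + 1) - w i, fun i => hstep i i.isLt, fun i j hij => ?_, ?_⟩
  · rw [hIcc, Finset.sum_Icc_sub (Fin.le_def.mp hij.le), sub_ne_zero]
    intro h
    have := hinj (Set.mem_Iic.mpr j.isLt) (Set.mem_Iic.mpr (Nat.le_of_lt (i.isLt))) h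
    have := Fin.lt_def.mp hij
    omega
  · rw [Fin.sum_univ_eq_sum_range (fun i => w (i + 1) - w i), Finset.sum_range_sub, hw₀, sub_zero]

end Walk

theorem ZMod.intCast_mem_Rset_of_injOn {n m : ℕ} {S : Set (ZMod n)} (Q : ℕ → ℤ) (hQ₀ : Q 0 = 0)
    (hstep : ∀ i < m, ((Q (i + 1) - Q i : ℤ) : ZMod n) ∈ S) (hinj : Set.InjOn Q (Set.Iic m))
    (hbound : ∀ i ≤ m, 0 ≤ Q i ∧ Q i < n) : ((Q m : ℤ) : ZMod n) ∈ Rset m S := by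
  refine mem_Rset_of_injOn (fun i => (Q i : ZMod n)) (by simp [hQ₀])
    (fun i hi => by simpa using hstep i hi) fun i hi j hj h => hinj hi hj ?_
  have hi' := hbound i hi
  have hj' := hbound j hj
  rw [ZMod.intCast_eq_intCast_iff'] at h
  rwa [Int.emod_eq_of_lt hi'.1 hi'.2, Int.emod_eq_of_lt hj'.1 hj'.2] at h

theorem intCast_mem_Rset_ramp {n a k A P M : ℕ} {S : Set (ZMod n)}
    (hS : ∀ ℓ ≤ k, ((a * ℓ + 1 : ℕ) : ZMod n) ∈ S) (hS₁ : (-1 : ZMod n) ∈ S)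
    (hA : 1 ≤ A) (hAP : A ≤ P * k) (hM : M ≤ a) (hpeak : a * A + P < n) :
    ((a * A + P - M : ℤ) : ZMod n) ∈ Rset (P + M) S := by
  have hk : 1 ≤ k := Nat.pos_of_ne_zero (by rintro rfl; omega)
  -- climb by steps `a ℓ + 1` with `ℓ ≤ k`, back-loading the `ℓ`'s so that the last climbing step
  -- is at least `a + 1`, then descend by steps `-1`
  set L : ℕ → ℕ := fun c => A + c * k - P * k with hL
  have hLsucc (c : ℕ) : L c ≤ L (c + 1) ∧ L (c + 1) ≤ L c + k := by
    simp only [hL, Nat.succ_mul]; omega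
  have hLmono : Monotone L := monotone_nat_of_le_succ fun c => (hLsucc c).1
  have hLlt (c : ℕ) (hc : c < P) : L c < A := by
    have : (c + 1) * k ≤ P * k := Nat.mul_le_mul_right k hc
    simp only [hL, Nat.succ_mul] at this ⊢; omega
  have hLP : L P = A := by simp [hL]
  set Q : ℕ → ℤ := fun c => if c ≤ P then ((a * L c + c : ℕ) : ℤ) else a * A + 2 * P - c with hQ
  have hQdown (c : ℕ) (hc : P ≤ c) : Q c = a * A + 2 * P - c := by
    rcases hc.eq_or_lt with rfl | hc
    · simp [hQ, hLP]; ring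
    · simp [hQ, Nat.not_le.mpr hc]
  have hQ₀ : Q 0 = 0 := by simp [hQ, hL, hAP]
  have hstep (c : ℕ) (_ : c < P + M) : ((Q (c + 1) - Q c : ℤ) : ZMod n) ∈ S := by
    by_cases hc : c < P
    · obtain ⟨h₁, h₂⟩ := hLsucc c
      have : Q (c + 1) - Q c = ((a * (L (c + 1) - L c) + 1 : ℕ) : ℤ) := by
        simp only [hQ, if_pos hc.le, if_pos (show c + 1 ≤ P by omega), Nat.mul_sub]
        have := Nat.mul_le_mul_left a h₁
        push_cast [Nat.cast_sub this]; ring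
      rw [this, Int.cast_natCast]
      exact hS _ (by omega)
    · rw [hQdown c (by omega), hQdown (c + 1) (by omega)]
      convert hS₁ using 1
      push_cast; ring
  have hup {i j : ℕ} (hij : i < j) (hj : j ≤ P) : Q i < Q j := by
    have := Nat.mul_le_mul_left a (hLmono hij.le)
    simp only [hQ, if_pos hj, if_pos (hij.le.trans hj)]
    omega
  have hcross {i j : ℕ} (hi : i < P) (hj : P ≤ j) (hjM : j ≤ P + M) : Q i < Q j := by
    have := Nat.mul_le_mul_left a (Nat.le_sub_one_of_lt (hLlt i hi))
    rw [Nat.mul_sub_one] at this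
    have := Nat.le_mul_of_pos_right a hA
    rw [hQdown j hj]
    simp only [hQ, if_pos hi.le]
    push_cast
    omega
  have hne {i j : ℕ} (hij : i < j) (hj : j ≤ P + M) : Q i ≠ Q j := by
    rcases le_or_gt j P with hjP | hPj
    · exact (hup hij hjP).ne
    rcases lt_or_ge i P with hiP | hPi
    · exact (hcross hiP hPj.le hj).ne
    · rw [hQdown i hPi, hQdown j hPj.le]
      omega
  have hinj : Set.InjOn Q (Set.Iic (P + M)) := fun i hi j hj h => by
    by_contra hij
    rcases Nat.lt_or_gt_of_ne hij with hij | hij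
    · exact hne hij hj h
    · exact hne hij hi h.symm
  have hbound (c : ℕ) (hc : c ≤ P + M) : 0 ≤ Q c ∧ Q c < n := by
    have := Nat.le_mul_of_pos_right a hA
    rcases le_or_gt c P with hcP | hPc
    · have := Nat.mul_le_mul_left a (hLP ▸ hLmono hcP)
      simp only [hQ, if_pos hcP]
      omega
    · rw [hQdown c hPc.le]
      omega
  have := ZMod.intCast_mem_Rset_of_injOn Q hQ₀ hstep hinj hbound
  rwa [hQdown _ (by omega), show ((P + M : ℕ) : ℤ) = P + M by push_cast; rfl,
    show (a * A + 2 * P - (P + M) : ℤ) = a * A + P - M by ring] at this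

def signedProgression (n a k : ℕ) : Set (ZMod n) :=
  {x | ∃ ℓ ≤ k, x = ((a * ℓ + 1 : ℕ) : ZMod n) ∨ x = -((a * ℓ + 1 : ℕ) : ZMod n)}

namespace signedProgression

variable {n a k : ℕ}

theorem natCast_mem {ℓ : ℕ} (hℓ : ℓ ≤ k) : ((a * ℓ + 1 : ℕ) : ZMod n) ∈ signedProgression n a k :=
  ⟨ℓ, hℓ, .inl rfl⟩

theorem neg_mem {x : ZMod n} (hx : x ∈ signedProgression n a k) :
    -x ∈ signedProgression n a k := by
  obtain ⟨ℓ, hℓ, rfl | rfl⟩ := hx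
  · exact ⟨ℓ, hℓ, .inr rfl⟩
  · exact ⟨ℓ, hℓ, .inl (neg_neg _)⟩

theorem neg_one_mem : (-1 : ZMod n) ∈ signedProgression n a k := by
  simpa using neg_mem (natCast_mem (a := a) (n := n) (Nat.zero_le k))

-- `P` counts the positive terms and `U` is the signed sum of the `ℓ`'s.
theorem exists_sum_eq {j : ℕ} (s : Fin j → ZMod n) (hs : ∀ i, s i ∈ signedProgression n a k) :
    ∃ U P : ℤ, 0 ≤ P ∧ P ≤ j ∧ U ≤ P * k ∧ -((j - P) * k) ≤ U ∧
      ∑ i, s i = ((a * U + 2 * P - j : ℤ) : ZMod n) := by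
  induction j with
  | zero => exact ⟨0, 0, by simp⟩
  | succ j ih =>
    obtain ⟨U, P, hP₀, hPj, hUP, hPU, hsum⟩ := ih (fun i => s i.succ) fun i => hs i.succ
    obtain ⟨ℓ, hℓ, hsℓ | hsℓ⟩ := hs 0 <;> rw [Fin.sum_univ_succ, hsum, hsℓ] <;>
      have hℓ' : (ℓ : ℤ) ≤ k := by exact_mod_cast hℓ
    · refine ⟨U + ℓ, P + 1, by omega, by push_cast; omega, by linarith, by push_cast; linarith, ?_⟩
      push_cast; ring
    · refine ⟨U - ℓ, P, hP₀, by push_cast; omega, by linarith, by push_cast; linarith, ?_⟩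
      push_cast; ring

end signedProgression

section Arithmetic

variable {α k : ℕ}

theorem two_mul_add_ne {U P : ℤ} (hP : P ≤ 2 * α + 3) (hUP : U ≤ P * k) :
    2 * α * U + 2 * P - (2 * α + 3) ≠ 2 * α * (α + 4) * k + 2 * α + 5 := by
  intro h
  have hX : α * (U - (α + 4) * k - 1) = α + 4 - P := by linarith
  rcases le_or_gt 0 (U - (α + 4) * k - 1) with hX₀ | hX₀
  · have hPα : α + 5 ≤ P := by
      by_contra! hPα
      nlinarith [mul_le_mul_of_nonneg_right (show P ≤ α + 4 by omega) (Int.natCast_nonneg k)]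
    nlinarith [mul_nonneg (Int.natCast_nonneg α) hX₀]
  · nlinarith [mul_le_mul_of_nonneg_left (Int.le_sub_one_of_lt hX₀) (Int.natCast_nonneg α)]

/-- The modulus is odd and exceeds half of every admissible value, so it can only be `±` the
value, which `two_mul_add_ne` rules out (for `-` after the symmetry `U ↦ -U`, `P ↦ 2α + 3 - P`). -/
theorem not_dvd_two_mul_add {U P : ℤ} (hP₀ : 0 ≤ P) (hP : P ≤ 2 * α + 3) (hUP : U ≤ P * k)
    (hPU : -((2 * α + 3 - P) * k) ≤ U) :
    ¬ (2 * α * (α + 4) * k + 2 * α + 5 : ℤ) ∣ 2 * α * U + 2 * P - (2 * α + 3) := by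
  rintro ⟨c, hc⟩
  have hα : (0 : ℤ) ≤ α := Int.natCast_nonneg α
  have hk : (0 : ℤ) ≤ k := Int.natCast_nonneg k
  have hαk : 0 ≤ (α : ℤ) * k := mul_nonneg hα hk
  have hααk : 0 ≤ (α : ℤ) * α * k := mul_nonneg (mul_nonneg hα hα) hk
  have hodd : 2 * (α * U + P - α - 2) + 1 = (2 * α * (α + 4) * k + 2 * α + 5) * c := by
    linarith
  have hc₀ : c ≠ 0 := by rintro rfl; omega
  have hupper : α * U ≤ α * ((2 * α + 3) * k) :=
    mul_le_mul_of_nonneg_left (hUP.trans (mul_le_mul_of_nonneg_right hP hk)) hα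
  have hlower : -(α * ((2 * α + 3) * k)) ≤ α * U := by
    have : (2 * α + 3 - P) * k ≤ (2 * α + 3) * k := mul_le_mul_of_nonneg_right (by linarith) hk
    nlinarith [mul_le_mul_of_nonneg_left hPU hα]
  have hc₁ : c < 2 := by nlinarith
  have hc₂ : -2 < c := by nlinarith
  obtain rfl | rfl : c = 1 ∨ c = -1 := by omega
  · exact two_mul_add_ne hP hUP (by linarith)
  · exact two_mul_add_ne (α := α) (k := k) (U := -U) (P := 2 * α + 3 - P) (by linarith)
      (by linarith) (by linarith)

end Arithmetic

theorem exists_ramp_params {α k r : ℕ} (hα : 1 ≤ α) (hk : 1 ≤ k) (hr : Even r) (hr₀ : r ≠ 0)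
    (hrn : r < 2 * α * (α + 4) * k + 2 * α + 5)
    (hexcl : ∀ ℓ ≤ k, r + (2 * α * ℓ + 1) ≠ 2 * α * (α + 4) * k + 2 * α + 5) :
    ∃ A P : ℕ, 1 ≤ A ∧ 2 ≤ P ∧ P ≤ 2 * α + 2 ∧ r + 2 * α + 2 = 2 * α * A + 2 * P ∧
      A ≤ P * k ∧ 2 * α * A + P < 2 * α * (α + 4) * k + 2 * α + 5 := by
  obtain ⟨s, rfl⟩ := hr
  set K := (α + 4) * k with hK
  have hN : 2 * α * (α + 4) * k = 2 * (α * K) := by ring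
  have hαK : α ≤ α * K := Nat.le_mul_of_pos_right α (Nat.mul_pos (by omega) hk)
  rcases le_or_gt s (2 * α) with hs | hs
  · refine ⟨1, s + 1, le_rfl, by omega, by omega, by ring, ?_, by omega⟩
    exact Nat.mul_pos (by omega) hk
  obtain ⟨A, d, hd, hsA⟩ : ∃ A d, d < α ∧ s - 2 = α * A + d :=
    ⟨(s - 2) / α, (s - 2) % α, Nat.mod_lt _ hα, (Nat.div_add_mod _ _).symm⟩
  have h2A : 2 * α * A = 2 * (α * A) := by ring
  have hA : 1 ≤ A := Nat.pos_of_ne_zero (by rintro rfl; omega)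
  have hAK : A ≤ K := by
    by_contra! hKA
    have := Nat.mul_le_mul_left α hKA
    rw [Nat.mul_succ] at this
    exact hexcl 0 (Nat.zero_le k) (by omega)
  have hαA := Nat.mul_le_mul_left α hAK
  refine ⟨A, α + 3 + d, hA, by omega, by omega, by omega, ?_, by omega⟩
  rcases Nat.eq_zero_or_pos d with rfl | hd₀
  · -- a climb of capacity `(α + 3) k` is enough, since a larger `A` makes `r = n - (2αℓ + 1)`
    rw [Nat.add_zero]
    by_contra! hkA
    have hKk : K = (α + 3) * k + k := by rw [hK]; ring
    have hℓ : α * (K + 1 - A) = α * K + α - α * A := by rw [Nat.mul_sub, Nat.mul_succ]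
    exact hexcl (K + 1 - A) (by omega) (by rw [mul_assoc, hℓ]; omega)
  · exact hAK.trans (Nat.mul_le_mul_right k (by omega))

namespace signedProgression

variable {α k : ℕ}

theorem notMem_of_mem_Rset {x : ZMod (2 * α * (α + 4) * k + 2 * α + 5)}
    (hx : x ∈ Rset (2 * α + 2) (signedProgression _ (2 * α) k)) :
    x ∉ signedProgression _ (2 * α) k := by
  obtain ⟨s, hs, -, rfl⟩ := hx
  intro hmem
  -- `-x, s₀, …, s_{2α+1}` are `2α + 3` elements of the progression summing to `0`
  obtain ⟨U, P, hP₀, hP, hUP, hPU, hsum⟩ :=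
    exists_sum_eq (Fin.cons (-∑ i, s i) s) (Fin.cases (neg_mem hmem) hs)
  rw [Fin.sum_cons, neg_add_cancel, eq_comm, ZMod.intCast_zmod_eq_zero_iff_dvd] at hsum
  push_cast at hP hPU hsum
  exact not_dvd_two_mul_add hP₀ hP hUP hPU hsum

theorem mem_Rset_of_even_val (hα : 1 ≤ α) (hk : 1 ≤ k)
    {y : ZMod (2 * α * (α + 4) * k + 2 * α + 5)} (hy : Even y.val) (hy₀ : y ≠ 0)
    (hyS : y ∉ signedProgression _ (2 * α) k) :
    y ∈ Rset (2 * α + 2) (signedProgression _ (2 * α) k) := by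
  obtain ⟨A, P, hA, hP₂, hP, hyAP, hAP, hpeak⟩ := exists_ramp_params hα hk hy
    (by rwa [ne_eq, ZMod.val_eq_zero]) (ZMod.val_lt y) fun ℓ hℓ h => hyS ⟨ℓ, hℓ, .inr <|
      eq_neg_of_add_eq_zero_left <| by rw [← ZMod.natCast_zmod_val y, ← Nat.cast_add, h,
        ZMod.natCast_self]⟩
  have := intCast_mem_Rset_ramp (M := 2 * α + 2 - P) (fun _ => natCast_mem) neg_one_mem hA hAP
    (by omega) hpeak
  rw [show P + (2 * α + 2 - P) = 2 * α + 2 by omega] at this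
  convert this
  rw [← ZMod.natCast_zmod_val y, ← Int.cast_natCast]
  congr 1
  zify [hP] at hyAP ⊢
  linarith

end signedProgression

theorem stmt6 (α k n : ℕ) (hα : 1 ≤ α) (hk : 1 ≤ k)
    (hn : n = 2 * α * (α + 4) * k + 2 * α + 5)
    (S : Set (ZMod n))
    (hS : S = {x | ∃ ℓ ≤ k, x = ((2 * α * ℓ + 1 : ℕ) : ZMod n) ∨
      x = -((2 * α * ℓ + 1 : ℕ) : ZMod n)}) :
    Rset (2 * α + 2) S = (S ∪ {0})ᶜ := by
  subst hn hS
  change Rset _ (signedProgression _ (2 * α) k) = (signedProgression _ (2 * α) k ∪ {0})ᶜ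
  ext x
  simp only [Set.mem_compl_iff, Set.mem_union, Set.mem_singleton_iff, not_or]
  refine ⟨fun hx => ⟨signedProgression.notMem_of_mem_Rset hx,
    fun h => zero_notMem_Rset (by omega) (h ▸ hx)⟩, fun ⟨hxS, hx₀⟩ => ?_⟩
  rcases Nat.even_or_odd x.val with hx | hx
  · exact signedProgression.mem_Rset_of_even_val hα hk hx hx₀ hxS
  -- the modulus is odd, so `-x` has the even representative `n - x.val`
  have hneg : Even (-x).val := by
    rw [ZMod.neg_val, if_neg hx₀, Nat.even_sub (ZMod.val_lt x).le]
    have : ¬ Even (2 * α * (α + 4) * k + 2 * α + 5) := by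
      rw [Nat.not_even_iff_odd]; exact ⟨α * (α + 4) * k + α + 2, by ring⟩
    simpa [this] using hx
  rw [← neg_neg x]
  exact neg_mem_Rset (fun _ => signedProgression.neg_mem)
    (signedProgression.mem_Rset_of_even_val hα hk hneg (neg_ne_zero.mpr hx₀)
    fun h => hxS (neg_neg x ▸ signedProgression.neg_mem h))
end

section
/- Let k ≥ 4 and n = 3k + 1. Then S = {k, 2k+1} ∪ {k+2, k+3, …, 2k-1} ⊆ ℤ/nℤ is a symmetric complete sum-free set of size k. -/
open Pointwise

theorem stmt8 (k n : ℕ) (hk : 4 ≤ k) (hn : n = 3 * k + 1)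
    (S : Set (ZMod n))
    (hS : S = (fun i : ℕ => (i : ZMod n)) ''
      ({k, 2 * k + 1} ∪ Set.Icc (k + 2) (2 * k - 1))) :
    S = -S ∧ S + S = Sᶜ ∧ S.ncard = k := by
  subst hn
  haveI : NeZero (3 * k + 1) := ⟨by omega⟩
  have hmemT : ∀ t : ℕ, t ∈ ({k, 2 * k + 1} ∪ Set.Icc (k + 2) (2 * k - 1) : Set ℕ) ↔
      t = k ∨ t = 2 * k + 1 ∨ (k + 2 ≤ t ∧ t ≤ 2 * k - 1) := by
    intro t
    simp [Set.mem_Icc]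
    tauto
  have hT_lt : ∀ t ∈ ({k, 2 * k + 1} ∪ Set.Icc (k + 2) (2 * k - 1) : Set ℕ), t < 3 * k + 1 := by
    intro t ht; rw [hmemT] at ht; omega
  have memS : ∀ x : ZMod (3 * k + 1), x ∈ S ↔
      x.val = k ∨ x.val = 2 * k + 1 ∨ (k + 2 ≤ x.val ∧ x.val ≤ 2 * k - 1) := by
    intro x
    rw [hS]
    constructor
    · rintro ⟨t, ht, rfl⟩
      rw [ZMod.val_cast_of_lt (hT_lt t ht)]
      exact (hmemT t).mp ht
    · intro hv
      exact ⟨x.val, (hmemT _).mpr hv, ZMod.natCast_rightInverse x⟩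
  have castval : ∀ x : ZMod (3 * k + 1), ((x.val : ℕ) : ZMod (3 * k + 1)) = x :=
    ZMod.natCast_rightInverse
  -- symmetry
  have hsym : ∀ x : ZMod (3 * k + 1), x ∈ S → -x ∈ S := by
    intro x hx
    rw [memS] at hx
    have hlt : x.val < 3 * k + 1 := ZMod.val_lt x
    have hne : x ≠ 0 := by
      intro h
      rw [h, ZMod.val_zero] at hx
      omega
    have hnv : (-x).val = 3 * k + 1 - x.val := by
      rw [ZMod.neg_val, if_neg hne]
    rw [memS, hnv]
    omega
  have hSsym : S = -S := by
    ext x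
    constructor
    · intro hx
      rw [Set.mem_neg]
      simpa using hsym x hx
    · intro hx
      rw [Set.mem_neg] at hx
      simpa using hsym _ hx
  refine ⟨hSsym, ?_, ?_⟩
  · -- S + S = Sᶜ
    ext x
    constructor
    · rintro hx
      obtain ⟨a, ha, b, hb, rfl⟩ := Set.mem_add.mp hx
      rw [memS] at ha hb
      have hav : a.val < 3 * k + 1 := ZMod.val_lt a
      have hbv : b.val < 3 * k + 1 := ZMod.val_lt b
      rw [Set.mem_compl_iff, memS, ZMod.val_add]
      rcases Nat.lt_or_ge (a.val + b.val) (3 * k + 1) with h | h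
      · rw [Nat.mod_eq_of_lt h]; omega
      · rw [Nat.mod_eq_sub_mod h, Nat.mod_eq_of_lt (by omega)]; omega
    · intro hx
      rw [Set.mem_compl_iff, memS] at hx
      have hclt : x.val < 3 * k + 1 := ZMod.val_lt x
      have key : ∀ s t : ℕ,
          (s = k ∨ s = 2 * k + 1 ∨ (k + 2 ≤ s ∧ s ≤ 2 * k - 1)) →
          (t = k ∨ t = 2 * k + 1 ∨ (k + 2 ≤ t ∧ t ≤ 2 * k - 1)) →
          (s + t = x.val ∨ s + t = x.val + (3 * k + 1)) →
          x ∈ S + S := by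
        intro s t hs ht heq
        have hs' : s < 3 * k + 1 := by omega
        have ht' : t < 3 * k + 1 := by omega
        refine Set.mem_add.mpr ⟨(s : ZMod (3 * k + 1)), ?_, (t : ZMod (3 * k + 1)), ?_, ?_⟩
        · rw [memS, ZMod.val_cast_of_lt hs']; exact hs
        · rw [memS, ZMod.val_cast_of_lt ht']; exact ht
        · have h2 : ((s + t : ℕ) : ZMod (3 * k + 1)) = ((x.val : ℕ) : ZMod (3 * k + 1)) := by
            rcases heq with h | h
            · rw [h]
            · rw [h, Nat.cast_add, ZMod.natCast_self, add_zero]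
          rw [← Nat.cast_add, h2, castval]
      rcases (show x.val = k + 1 ∨ x.val = 2 * k ∨ x.val = 2 * k + 3 ∨ x.val = 1 ∨
          (2 * k + 2 ≤ x.val ∧ x.val ≤ 3 * k ∧ x.val ≠ 2 * k + 3) ∨
          (x.val ≤ k - 1 ∧ x.val ≠ 1) from by omega)
        with h | h | h | h | h | h
      · exact key (2 * k + 1) (2 * k + 1) (by omega) (by omega) (by omega)
      · exact key k k (by omega) (by omega) (by omega)
      · exact key k (k + 3) (by omega) (by omega) (by omega)
      · exact key (k + 3) (2 * k - 1) (by omega) (by omega) (by omega)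
      · exact key (k + 2) (x.val - k - 2) (by omega) (by omega) (by omega)
      · exact key (2 * k + 1) (k + x.val) (by omega) (by omega) (by omega)
  · -- cardinality
    have hinj : Set.InjOn (fun i : ℕ => (i : ZMod (3 * k + 1)))
        ({k, 2 * k + 1} ∪ Set.Icc (k + 2) (2 * k - 1)) := by
      intro a ha b hb hab
      have h2 : ((a : ZMod (3 * k + 1))).val = ((b : ZMod (3 * k + 1))).val :=
        congrArg ZMod.val hab
      rwa [ZMod.val_cast_of_lt (hT_lt a ha), ZMod.val_cast_of_lt (hT_lt b hb)] at h2
    rw [hS, Set.ncard_image_of_injOn hinj]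
    have hTeq : ({k, 2 * k + 1} ∪ Set.Icc (k + 2) (2 * k - 1) : Set ℕ) =
        insert k (insert (2 * k + 1) (Set.Icc (k + 2) (2 * k - 1))) := by
      ext t; simp [Set.mem_Icc]; tauto
    rw [hTeq]
    have hfin : (Set.Icc (k + 2) (2 * k - 1)).Finite := Set.finite_Icc _ _
    rw [Set.ncard_insert_of_notMem (by simp [Set.mem_Icc]; omega) (hfin.insert _),
      Set.ncard_insert_of_notMem (by simp [Set.mem_Icc]) hfin,
      ← Finset.coe_Icc, Set.ncard_coe_finset, Nat.card_Icc]
    omega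
end

section
/- Let k ≥ 7 and n = 3k. Then S = {k-1, k+1, 2k+1, 2k-1} ∪ {k+3, k+4, …, 2k-3} ⊆ ℤ/nℤ is a symmetric complete sum-free set of size k - 1. -/
open Pointwise

/-- membership predicate for the underlying set of naturals -/
def memT (k v : ℕ) : Prop :=
  v = k - 1 ∨ v = k + 1 ∨ v = 2 * k + 1 ∨ v = 2 * k - 1 ∨ (k + 3 ≤ v ∧ v ≤ 2 * k - 3)

lemma memT_lt {k v : ℕ} (hk : 7 ≤ k) (h : memT k v) : v < 3 * k := by
  unfold memT at h; omega

lemma sumfree_nat (k a b v : ℕ) (hk : 7 ≤ k) (ha : memT k a) (hb : memT k b)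
    (h : v = a + b ∨ v + 3 * k = a + b) : ¬ memT k v := by
  unfold memT at *; omega

lemma complete_nat (k v : ℕ) (hk : 7 ≤ k) (hv : v < 3 * k) (h : ¬ memT k v) :
    ∃ a b, memT k a ∧ memT k b ∧ (v = a + b ∨ v + 3 * k = a + b) := by
  unfold memT at *
  by_cases h0 : v = 0
  · exact ⟨k - 1, 2 * k + 1, by omega, by omega, by omega⟩
  by_cases h1 : v = 1
  · exact ⟨k + 4, 2 * k - 3, by omega, by omega, by omega⟩
  by_cases h2 : v = 2
  · exact ⟨k + 1, 2 * k + 1, by omega, by omega, by omega⟩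
  by_cases h3 : v = 3
  · exact ⟨k + 4, 2 * k - 1, by omega, by omega, by omega⟩
  by_cases h4 : v ≤ k - 2
  · exact ⟨2 * k + 1, v + k - 1, by omega, by omega, by omega⟩
  by_cases h5 : v = k
  · exact ⟨2 * k - 1, 2 * k + 1, by omega, by omega, by omega⟩
  by_cases h6 : v = k + 2
  · exact ⟨2 * k + 1, 2 * k + 1, by omega, by omega, by omega⟩
  by_cases h7 : v = 2 * k - 2
  · exact ⟨k - 1, k - 1, by omega, by omega, by omega⟩
  by_cases h8 : v = 2 * k
  · exact ⟨k - 1, k + 1, by omega, by omega, by omega⟩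
  by_cases h9 : v = 2 * k + 2
  · exact ⟨k + 1, k + 1, by omega, by omega, by omega⟩
  by_cases h10 : v = 2 * k + 3
  · exact ⟨k - 1, k + 4, by omega, by omega, by omega⟩
  by_cases h11 : v = 3 * k - 1
  · exact ⟨k + 3, 2 * k - 4, by omega, by omega, by omega⟩
  · exact ⟨k + 1, v - (k + 1), by omega, by omega, by omega⟩

theorem stmt9 (k n : ℕ) (hk : 7 ≤ k) (hn : n = 3 * k)
    (S : Set (ZMod n))
    (hS : S = (fun i : ℕ => (i : ZMod n)) ''
      ({k - 1, k + 1, 2 * k + 1, 2 * k - 1} ∪ Set.Icc (k + 3) (2 * k - 3))) :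
    S = -S ∧ S + S = Sᶜ ∧ S.ncard = k - 1 := by
  subst hn
  haveI : NeZero (3 * k) := ⟨by omega⟩
  have hmem : ∀ x : ZMod (3 * k), x ∈ S ↔ memT k x.val := by
    intro x
    rw [hS]
    constructor
    · rintro ⟨a, ha, rfl⟩
      simp only [Set.mem_union, Set.mem_insert_iff, Set.mem_singleton_iff, Set.mem_Icc] at ha
      have haT : memT k a := by unfold memT; tauto
      rw [ZMod.val_cast_of_lt (memT_lt hk haT)]
      exact haT
    · intro hP
      refine ⟨x.val, ?_, ZMod.natCast_rightInverse x⟩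
      simp only [Set.mem_union, Set.mem_insert_iff, Set.mem_singleton_iff, Set.mem_Icc]
      unfold memT at hP; tauto
  have hvx : ∀ x : ZMod (3 * k), ((x.val : ℕ) : ZMod (3 * k)) = x :=
    fun x => ZMod.natCast_rightInverse x
  -- symmetric
  have hneg : ∀ x : ZMod (3 * k), x ∈ S → -x ∈ S := by
    intro x hx
    have hP := (hmem x).1 hx
    have hlt := memT_lt hk hP
    have h0 : 0 < x.val := by unfold memT at hP; omega
    have hx' : -x = ((3 * k - x.val : ℕ) : ZMod (3 * k)) := by
      have hz : x + ((3 * k - x.val : ℕ) : ZMod (3 * k)) = 0 := by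
        calc x + ((3 * k - x.val : ℕ) : ZMod (3 * k))
            = ((x.val : ℕ) : ZMod (3 * k)) + ((3 * k - x.val : ℕ) : ZMod (3 * k)) := by
              rw [hvx]
          _ = ((x.val + (3 * k - x.val) : ℕ) : ZMod (3 * k)) := (Nat.cast_add _ _).symm
          _ = ((3 * k : ℕ) : ZMod (3 * k)) := by rw [show x.val + (3 * k - x.val) = 3 * k by omega]
          _ = 0 := ZMod.natCast_self _
      exact (neg_eq_of_add_eq_zero_right hz)
    rw [hx', hmem]
    rw [ZMod.val_cast_of_lt (by omega)]
    unfold memT at hP ⊢; omega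
  have hsym : S = -S := by
    ext x
    rw [Set.mem_neg]
    constructor
    · intro hx
      have := hneg x hx
      simpa using this
    · intro hx
      have := hneg (-x) hx
      simpa using this
  refine ⟨hsym, ?_, ?_⟩
  · -- S + S = Sᶜ
    ext x
    constructor
    · rintro ⟨a, ha, b, hb, rfl⟩
      have hPa := (hmem a).1 ha
      have hPb := (hmem b).1 hb
      have hva := ZMod.val_lt a
      have hvb := ZMod.val_lt b
      have hsum : (a + b).val = a.val + b.val ∨ (a + b).val + 3 * k = a.val + b.val := by
        rw [ZMod.val_add]
        rcases Nat.lt_or_ge (a.val + b.val) (3 * k) with h | h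
        · left; rw [Nat.mod_eq_of_lt h]
        · right; rw [Nat.mod_eq_sub_mod h, Nat.mod_eq_of_lt (by omega)]; omega
      intro hmemS
      exact sumfree_nat k a.val b.val (a + b).val hk hPa hPb hsum ((hmem _).1 hmemS)
    · intro hx
      have hP : ¬ memT k x.val := fun h => hx ((hmem x).2 h)
      obtain ⟨a, b, hPa, hPb, hab⟩ := complete_nat k x.val hk (ZMod.val_lt x) hP
      have haS : (a : ZMod (3 * k)) ∈ S := by
        rw [hmem, ZMod.val_cast_of_lt (memT_lt hk hPa)]; exact hPa
      have hbS : (b : ZMod (3 * k)) ∈ S := by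
        rw [hmem, ZMod.val_cast_of_lt (memT_lt hk hPb)]; exact hPb
      refine ⟨a, haS, b, hbS, ?_⟩
      show (a : ZMod (3 * k)) + (b : ZMod (3 * k)) = x
      rcases hab with h | h
      · rw [← Nat.cast_add, ← h, hvx]
      · rw [← Nat.cast_add, ← h, Nat.cast_add, ZMod.natCast_self, add_zero, hvx]
  · -- cardinality
    have hinj : Set.InjOn (fun i : ℕ => (i : ZMod (3 * k)))
        ({k - 1, k + 1, 2 * k + 1, 2 * k - 1} ∪ Set.Icc (k + 3) (2 * k - 3)) := by
      intro a ha b hb hab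
      simp only [Set.mem_union, Set.mem_insert_iff, Set.mem_singleton_iff, Set.mem_Icc] at ha hb
      have haT : memT k a := by unfold memT; tauto
      have hbT : memT k b := by unfold memT; tauto
      have hab' : (a : ZMod (3 * k)) = (b : ZMod (3 * k)) := hab
      have : ((a : ZMod (3 * k))).val = ((b : ZMod (3 * k))).val := by rw [hab']
      rwa [ZMod.val_cast_of_lt (memT_lt hk haT), ZMod.val_cast_of_lt (memT_lt hk hbT)] at this
    rw [hS, Set.ncard_image_of_injOn hinj]
    have hTF : ({k - 1, k + 1, 2 * k + 1, 2 * k - 1} ∪ Set.Icc (k + 3) (2 * k - 3) : Set ℕ) =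
        (↑(({k - 1, k + 1, 2 * k + 1, 2 * k - 1} : Finset ℕ) ∪ Finset.Icc (k + 3) (2 * k - 3)) :
          Set ℕ) := by
      simp [Finset.coe_union, Finset.coe_Icc, Finset.coe_insert, Set.insert_union, Set.singleton_union]
    rw [hTF, Set.ncard_coe_finset]
    rw [Finset.card_union_of_disjoint (by
      simp only [Finset.disjoint_left, Finset.mem_insert, Finset.mem_singleton, Finset.mem_Icc]
      intro a ha hb
      omega)]
    rw [Nat.card_Icc]
    rw [Finset.card_insert_of_notMem (by simp; omega),
      Finset.card_insert_of_notMem (by simp; omega),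
      Finset.card_insert_of_notMem (by simp; omega),
      Finset.card_singleton]
    omega
end

section
/- Let Γ be a finite abelian group and S ⊆ Γ a symmetric complete sum-free set. Then the Cayley graph Cay(Γ, S) is K₃-saturated: it is triangle-free, and adding any edge between non-adjacent vertices creates a triangle. Moreover it is |S|-regular with |Γ| vertices. -/
open Pointwise

/-- A graph is `K_m`-saturated. -/
def kSaturated {V : Type*} (G : SimpleGraph V) (m : ℕ) : Prop :=
  G.CliqueFree m ∧ ∀ x y : V, x ≠ y → ¬ G.Adj x y →
    ¬ (G ⊔ SimpleGraph.fromEdgeSet {s(x, y)}).CliqueFree m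

/-- A graph is `d`-regular. -/
def isRegular {V : Type*} (G : SimpleGraph V) (d : ℕ) : Prop :=
  ∀ v, (G.neighborSet v).ncard = d

theorem stmt10 {Γ : Type*} [AddCommGroup Γ] [Finite Γ] (S : Set Γ)
    (hsymm : S = -S) (hcomp : S + S = Sᶜ) :
    kSaturated (cayley S) 3 ∧ isRegular (cayley S) S.ncard := by
  classical
  have h0 : (0 : Γ) ∉ S := by
    intro h
    have h2 : (0 : Γ) ∈ S + S := by
      have := Set.add_mem_add h h
      simpa using this
    rw [hcomp] at h2
    exact h2 h
  have hneg : ∀ a : Γ, a ∈ S → -a ∈ S := by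
    intro a ha
    rw [hsymm] at ha
    simpa using ha
  have hadj : ∀ x y : Γ, (cayley S).Adj x y ↔ x - y ∈ S := by
    intro x y
    constructor
    · rintro ⟨hne, h | h⟩
      · exact h
      · have := hneg _ h
        simpa using this
    · intro h
      refine ⟨?_, Or.inl h⟩
      rintro rfl
      simp only [sub_self] at h
      exact h0 h
  have hsum : ∀ a b : Γ, a ∈ S → b ∈ S → a + b ∉ S := by
    intro a b ha hb
    have : a + b ∈ S + S := Set.add_mem_add ha hb
    rw [hcomp] at this
    exact this
  refine ⟨⟨?_, ?_⟩, ?_⟩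
  · intro t ht
    rw [SimpleGraph.is3Clique_iff] at ht
    obtain ⟨a, b, c, hab, hac, hbc, -⟩ := ht
    rw [hadj] at hab hac hbc
    have := hsum _ _ hab hbc
    rw [sub_add_sub_cancel] at this
    exact this hac
  · intro x y hxy hnadj hcf
    have hx : x - y ∉ S := fun h => hnadj ((hadj x y).2 h)
    have hx' : x - y ∈ S + S := by rw [hcomp]; exact hx
    obtain ⟨a, ha, b, hb, hab⟩ := hx'
    apply hcf {x, x - a, y}
    rw [SimpleGraph.is3Clique_iff]
    refine ⟨x, x - a, y, ?_, ?_, ?_, rfl⟩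
    · exact Or.inl ((hadj _ _).2 (by simpa using ha))
    · exact Or.inr ⟨by simp, hxy⟩
    · refine Or.inl ((hadj _ _).2 ?_)
      have : x - a - y = b := by
        have : x - y = a + b := hab.symm
        rw [sub_right_comm, this]
        abel
      rw [this]
      exact hb
  · intro v
    have himg : (cayley S).neighborSet v = (fun s => v - s) '' S := by
      ext w
      simp only [SimpleGraph.mem_neighborSet, hadj, Set.mem_image]
      constructor
      · intro h
        exact ⟨v - w, h, by abel⟩
      · rintro ⟨s, hs, rfl⟩
        simpa using hs
    rw [himg, Set.ncard_image_of_injective _ sub_right_injective]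
end

section
/- Let k ≥ 3, n = 5k + 4, and S = {1, 2, n-1, n-2} ∪ {x : 6 ≤ x ≤ 5(k-1)+3 and x ≡ 1 or 3 (mod 5)} ⊆ ℤ/nℤ. Then the subgraph of Cay(ℤ/nℤ, S) induced on the set S is triangle-free. -/
/-- Arithmetic characterization of membership in `S` via `ZMod.val`. -/
def stmt12Q (k r : ℕ) : Prop :=
  r = 1 ∨ r = 2 ∨ r = 5*k+2 ∨ r = 5*k+3 ∨
    (6 ≤ r ∧ r ≤ 5*k-2 ∧ (r % 5 = 1 ∨ r % 5 = 3))

/-- Constraints satisfied by an adjacent pair. -/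
def stmt12R (k x y : ℕ) : Prop :=
  x % 5 ≠ y % 5 ∧
  (x % 5 = 1 → y % 5 = 3 → (y = x + 2 ∨ (x = 1 ∧ y = 5*k+3) ∨ x ≥ y + 8)) ∧
  (y % 5 = 1 → x % 5 = 3 → (x = y + 2 ∨ (y = 1 ∧ x = 5*k+3) ∨ y ≥ x + 8)) ∧
  (x = 2 → (y % 5 = 1 → y = 1) ∧ (y % 5 = 3 → y ≤ 5*k-2)) ∧
  (y = 2 → (x % 5 = 1 → x = 1) ∧ (x % 5 = 3 → x ≤ 5*k-2)) ∧
  (x = 5*k+2 → (y % 5 = 1 → 6 ≤ y) ∧ (y % 5 = 3 → y = 5*k+3)) ∧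
  (y = 5*k+2 → (x % 5 = 1 → 6 ≤ x) ∧ (x % 5 = 3 → x = 5*k+3))

lemma stmt12Rsymm (k x y : ℕ) (h : stmt12R k x y) : stmt12R k y x := by
  obtain ⟨a, b, c, d, e, f, g⟩ := h
  exact ⟨fun hh => a hh.symm, c, b, e, d, g, f⟩

set_option maxHeartbeats 1000000 in
lemma stmt12pairR (k x y d e : ℕ) (hk : 3 ≤ k)
    (hx : stmt12Q k x) (hy : stmt12Q k y) (hxy : x ≠ y)
    (hd : d = x + (5*k+4) - y ∨ d = x + (5*k+4) - y - (5*k+4))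
    (he : e = y + (5*k+4) - x ∨ e = y + (5*k+4) - x - (5*k+4))
    (hadj : stmt12Q k d ∨ stmt12Q k e) :
    stmt12R k x y := by
  unfold stmt12Q stmt12R at *
  omega

lemma stmt12tri1 (k u v w : ℕ) (hk : 3 ≤ k)
    (hu : stmt12Q k u) (hv : stmt12Q k v) (hw : stmt12Q k w)
    (hu5 : u % 5 = 1) (hv5 : v % 5 = 2) (hw5 : w % 5 = 3)
    (h1 : stmt12R k u v) (h2 : stmt12R k u w) (h3 : stmt12R k v w) : False := by
  have hv2 : v = 2 ∨ v = 5*k+2 := by unfold stmt12Q at hv; omega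
  have huw := h2.2.1 hu5 hw5
  have hwb : w = 5*k+3 ∨ (8 ≤ w ∧ w ≤ 5*k-2) := by unfold stmt12Q at hw; omega
  have hub : u = 1 ∨ (6 ≤ u ∧ u ≤ 5*k-4) := by unfold stmt12Q at hu; omega
  rcases hv2 with hv2 | hv2
  · have h1' := (h1.2.2.2.2.1 hv2).1 hu5
    have h3' := (h3.2.2.2.1 hv2).2 hw5
    omega
  · have h1' := (h1.2.2.2.2.2.2 hv2).1 hu5
    have h3' := (h3.2.2.2.2.2.1 hv2).2 hw5
    omega

lemma stmt12combine (k A B C : ℕ) (hk : 3 ≤ k)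
    (hA : stmt12Q k A) (hB : stmt12Q k B) (hC : stmt12Q k C)
    (h1 : stmt12R k A B) (h2 : stmt12R k A C) (h3 : stmt12R k B C) : False := by
  have rA : A % 5 = 1 ∨ A % 5 = 2 ∨ A % 5 = 3 := by unfold stmt12Q at hA; omega
  have rB : B % 5 = 1 ∨ B % 5 = 2 ∨ B % 5 = 3 := by unfold stmt12Q at hB; omega
  have rC : C % 5 = 1 ∨ C % 5 = 2 ∨ C % 5 = 3 := by unfold stmt12Q at hC; omega
  have dAB : A % 5 ≠ B % 5 := h1.1
  have dAC : A % 5 ≠ C % 5 := h2.1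
  have dBC : B % 5 ≠ C % 5 := h3.1
  rcases rA with rA | rA | rA <;> rcases rB with rB | rB | rB <;>
    rcases rC with rC | rC | rC <;>
  first
  | exact dAB (rA.trans rB.symm)
  | exact dAC (rA.trans rC.symm)
  | exact dBC (rB.trans rC.symm)
  | exact stmt12tri1 k A B C hk hA hB hC rA rB rC h1 h2 h3
  | exact stmt12tri1 k A C B hk hA hC hB rA rC rB h2 h1 (stmt12Rsymm _ _ _ h3)
  | exact stmt12tri1 k B A C hk hB hA hC rB rA rC (stmt12Rsymm _ _ _ h1) h3 h2
  | exact stmt12tri1 k B C A hk hB hC hA rB rC rA h3 (stmt12Rsymm _ _ _ h1) (stmt12Rsymm _ _ _ h2)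
  | exact stmt12tri1 k C A B hk hC hA hB rC rA rB (stmt12Rsymm _ _ _ h2) (stmt12Rsymm _ _ _ h3) h1
  | exact stmt12tri1 k C B A hk hC hB hA rC rB rA (stmt12Rsymm _ _ _ h3) (stmt12Rsymm _ _ _ h2) (stmt12Rsymm _ _ _ h1)

lemma stmt12valsub (n : ℕ) (hn : 0 < n) (x y : ZMod n) :
    (x - y).val = x.val + n - y.val ∨ (x - y).val = x.val + n - y.val - n := by
  haveI : NeZero n := ⟨hn.ne'⟩
  have hx := ZMod.val_lt x
  have hy := ZMod.val_lt y
  have h1 : (x - y) = ((x.val + n - y.val : ℕ) : ZMod n) := by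
    have hle : y.val ≤ x.val + n := by omega
    rw [Nat.cast_sub hle]
    push_cast
    rw [ZMod.natCast_val, ZMod.natCast_val, ZMod.natCast_self, ZMod.cast_id, ZMod.cast_id]
    ring
  rw [h1, ZMod.val_natCast]
  rcases Nat.lt_or_ge (x.val + n - y.val) n with h | h
  · left; exact Nat.mod_eq_of_lt h
  · right; rw [Nat.mod_eq_sub_mod h, Nat.mod_eq_of_lt (by omega)]

theorem stmt12 (k n : ℕ) (hk : 3 ≤ k) (hn : n = 5 * k + 4)
    (S : Set (ZMod n))
    (hS : S = ({1, 2, -1, -2} : Set (ZMod n)) ∪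
      (fun x : ℕ => (x : ZMod n)) ''
        {x | 6 ≤ x ∧ x ≤ 5 * (k - 1) + 3 ∧ (x % 5 = 1 ∨ x % 5 = 3)}) :
    ((cayley S).induce S).CliqueFree 3 := by
  subst hn
  haveI : NeZero (5*k+4) := ⟨by omega⟩
  haveI : Fact (1 < 5*k+4) := ⟨by omega⟩
  have h0 : ((5*k+4 : ℕ) : ZMod (5*k+4)) = 0 := ZMod.natCast_self _
  have e3 : (-1 : ZMod (5*k+4)) = ((5*k+3 : ℕ) : ZMod (5*k+4)) := by
    push_cast at h0 ⊢
    linear_combination (-1 : ZMod (5*k+4)) * h0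
  have e4 : (-2 : ZMod (5*k+4)) = ((5*k+2 : ℕ) : ZMod (5*k+4)) := by
    push_cast at h0 ⊢
    linear_combination (-1 : ZMod (5*k+4)) * h0
  have hcastval : ∀ z : ZMod (5*k+4), ((z.val : ℕ) : ZMod (5*k+4)) = z := by
    intro z; rw [ZMod.natCast_val, ZMod.cast_id]
  have hQmem : ∀ z : ZMod (5*k+4), z ∈ S ↔ stmt12Q k z.val := by
    intro z
    constructor
    · intro h
      rw [hS] at h
      rcases h with h | ⟨x, ⟨hx6, hxle, hxm⟩, rfl⟩
      · simp only [Set.mem_insert_iff, Set.mem_singleton_iff] at h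
        unfold stmt12Q
        rcases h with rfl | rfl | rfl | rfl
        · rw [ZMod.val_one]; omega
        · rw [show (2 : ZMod (5*k+4)) = ((2:ℕ) : ZMod (5*k+4)) by norm_cast,
            ZMod.val_natCast, Nat.mod_eq_of_lt (by omega)]
          omega
        · rw [e3, ZMod.val_natCast, Nat.mod_eq_of_lt (by omega)]; omega
        · rw [e4, ZMod.val_natCast, Nat.mod_eq_of_lt (by omega)]; omega
      · unfold stmt12Q
        rw [ZMod.val_natCast, Nat.mod_eq_of_lt (by omega)]
        omega
    · intro h
      rw [hS]
      unfold stmt12Q at h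
      rcases h with h | h | h | h | ⟨h6, hle, hm⟩
      · left
        have : z = 1 := by rw [← hcastval z, h]; norm_cast
        simp [this]
      · left
        have : z = 2 := by rw [← hcastval z, h]; norm_cast
        simp [this]
      · left
        have : z = -2 := by rw [← hcastval z, h, e4]
        simp [this]
      · left
        have : z = -1 := by rw [← hcastval z, h, e3]
        simp [this]
      · right
        exact ⟨z.val, ⟨h6, by omega, hm⟩, hcastval z⟩
  intro t ht
  rw [SimpleGraph.is3Clique_iff] at ht
  obtain ⟨a, b, c, hab, hac, hbc, -⟩ := ht
  simp only [SimpleGraph.comap_adj, cayley, SimpleGraph.fromRel_adj] at hab hac hbc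
  have valne : ∀ x y : ZMod (5*k+4), x ≠ y → x.val ≠ y.val := by
    intro x y hne hv
    exact hne (by rw [← hcastval x, ← hcastval y, hv])
  have hpair : ∀ x y : ZMod (5*k+4), x ∈ S → y ∈ S → x ≠ y →
      (x - y ∈ S ∨ y - x ∈ S) → stmt12R k x.val y.val := by
    intro x y hx hy hne hadj
    exact stmt12pairR k x.val y.val (x-y).val (y-x).val hk
      ((hQmem x).mp hx) ((hQmem y).mp hy) (valne x y hne)
      (stmt12valsub _ (by omega) x y) (stmt12valsub _ (by omega) y x)
      (hadj.imp (fun h => (hQmem _).mp h) (fun h => (hQmem _).mp h))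
  exact stmt12combine k (↑a : ZMod (5*k+4)).val (↑b : ZMod (5*k+4)).val (↑c : ZMod (5*k+4)).val hk
    ((hQmem _).mp a.2) ((hQmem _).mp b.2) ((hQmem _).mp c.2)
    (hpair _ _ a.2 b.2 hab.1 hab.2)
    (hpair _ _ a.2 c.2 hac.1 hac.2)
    (hpair _ _ b.2 c.2 hbc.1 hbc.2)
end

section
/- Let k ≥ 3, n = 5k + 4, and S = {1, 2, n-1, n-2} ∪ {x : 6 ≤ x ≤ 5(k-1)+3 and x ≡ 1 or 3 (mod 5)} ⊆ ℤ/nℤ. Then the Cayley graph Cay(ℤ/nℤ, S) is a (2k+2)-regular K₄-saturated graph on n vertices. -/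
/-- Membership predicate for the canonical representatives of the connection set. -/
def Pk (k m : ℕ) : Prop :=
  m = 1 ∨ m = 2 ∨ m = 5*k+2 ∨ m = 5*k+3 ∨ (6 ≤ m ∧ m ≤ 5*k-2 ∧ (m % 5 = 1 ∨ m % 5 = 3))

theorem pcore (k A B C : ℕ) (hk : 3 ≤ k)
    (hA : Pk k A) (hB : Pk k B) (hC : Pk k C)
    (hAB : A < B) (hBC : B < C) (hC4 : C < 5*k+4)
    (hBA : Pk k (B - A)) (hCB : Pk k (C - B)) (hCA : Pk k (C - A)) : False := by
  unfold Pk at *; omega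

theorem stmt13 (k n : ℕ) (hk : 3 ≤ k) (hn : n = 5 * k + 4)
    (S : Set (ZMod n))
    (hS : S = ({1, 2, -1, -2} : Set (ZMod n)) ∪
      (fun x : ℕ => (x : ZMod n)) ''
        {x | 6 ≤ x ∧ x ≤ 5 * (k - 1) + 3 ∧ (x % 5 = 1 ∨ x % 5 = 3)}) :
    kSaturated (cayley S) 4 ∧ isRegular (cayley S) (2 * k + 2) ∧
      Nat.card (ZMod n) = n := by
  haveI : NeZero n := ⟨by omega⟩
  -- basic cast lemmas
  have hcast_eq : ∀ m : ℕ, ((m + n : ℕ) : ZMod n) = (m : ZMod n) := by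
    intro m; push_cast [ZMod.natCast_self]; ring
  have hneg : ∀ m : ℕ, m ≤ n → ((n - m : ℕ) : ZMod n) = -((m : ℕ) : ZMod n) := by
    intro m hm
    have h : ((n - m : ℕ) : ZMod n) + ((m : ℕ) : ZMod n) = ((n : ℕ) : ZMod n) := by
      rw [← Nat.cast_add]; congr 1; omega
    rw [ZMod.natCast_self] at h
    exact eq_neg_of_add_eq_zero_left h
  have hvalid : ∀ z : ZMod n, ((z.val : ℕ) : ZMod n) = z := fun z =>
    ZMod.natCast_rightInverse z
  -- the connection set via canonical representatives
  have hset : S = (fun m : ℕ => (m : ZMod n)) '' {m | m < n ∧ Pk k m} := by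
    rw [hS]; ext z
    simp only [Set.mem_union, Set.mem_insert_iff, Set.mem_singleton_iff, Set.mem_image,
      Set.mem_setOf_eq]
    constructor
    · rintro ((rfl | rfl | rfl | rfl) | ⟨x, ⟨hx1, hx2, hx3⟩, rfl⟩)
      · exact ⟨1, ⟨by omega, by unfold Pk; omega⟩, by norm_cast⟩
      · exact ⟨2, ⟨by omega, by unfold Pk; omega⟩, by norm_cast⟩
      · exact ⟨n - 1, ⟨by omega, by unfold Pk; omega⟩, by rw [hneg 1 (by omega)]; norm_cast⟩
      · exact ⟨n - 2, ⟨by omega, by unfold Pk; omega⟩, by rw [hneg 2 (by omega)]; norm_cast⟩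
      · exact ⟨x, ⟨by omega, by unfold Pk; omega⟩, rfl⟩
    · rintro ⟨m, ⟨hmn, hm⟩, rfl⟩
      unfold Pk at hm
      rcases hm with rfl | rfl | rfl | rfl | ⟨h6, hle, hmod⟩
      · left; left; norm_cast
      · left; right; left; norm_cast
      · left; right; right; right
        rw [show (5*k+2 : ℕ) = n - 2 by omega, hneg 2 (by omega)]; norm_cast
      · left; right; right; left
        rw [show (5*k+3 : ℕ) = n - 1 by omega, hneg 1 (by omega)]; norm_cast
      · exact Or.inr ⟨m, ⟨by omega, by omega, hmod⟩, rfl⟩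
  have hmemcast : ∀ m : ℕ, m < n → Pk k m → ((m : ℕ) : ZMod n) ∈ S := by
    intro m h1 h2; rw [hset]; exact ⟨m, ⟨h1, h2⟩, rfl⟩
  have hPz : ∀ z : ZMod n, z ∈ S ↔ Pk k z.val := by
    intro z; constructor
    · intro hz; rw [hset] at hz
      obtain ⟨m, ⟨hmn, hm⟩, rfl⟩ := hz
      rwa [ZMod.val_cast_of_lt hmn]
    · intro h
      have := hmemcast z.val (ZMod.val_lt z) h
      rwa [hvalid z] at this
  have h0 : (0 : ZMod n) ∉ S := by
    rw [hPz]; rw [ZMod.val_zero]; unfold Pk; omega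
  have hsymm : ∀ z : ZMod n, z ∈ S → -z ∈ S := by
    intro z hz
    have h1 := (hPz z).1 hz
    have hzv : 1 ≤ z.val ∧ z.val < n := ⟨by unfold Pk at h1; omega, ZMod.val_lt z⟩
    have : -z = ((n - z.val : ℕ) : ZMod n) := by
      rw [hneg z.val (le_of_lt hzv.2), hvalid z]
    rw [this]
    exact hmemcast _ (by omega) (by unfold Pk at h1 ⊢; omega)
  -- adjacency characterization
  have hadj : ∀ x y : ZMod n, (cayley S).Adj x y ↔ x - y ∈ S := by
    intro x y
    show (SimpleGraph.fromRel _).Adj x y ↔ _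
    rw [SimpleGraph.fromRel_adj]
    constructor
    · rintro ⟨hne, h | h⟩
      · exact h
      · have := hsymm _ h; rwa [neg_sub] at this
    · intro h
      refine ⟨?_, Or.inl h⟩
      intro heq; rw [heq, sub_self] at h; exact h0 h
  -- difference membership helper
  have key : ∀ a b : ℕ, b ≤ a → a - b < n → Pk k (a - b) →
      ((a : ℕ) : ZMod n) - ((b : ℕ) : ZMod n) ∈ S := by
    intro a b hle hlt hp
    rw [← Nat.cast_sub hle]
    exact hmemcast _ hlt hp
  -- no K4 with sorted values
  have core : ∀ a b c : ZMod n, a.val < b.val → b.val < c.val →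
      a ∈ S → b ∈ S → c ∈ S → b - a ∈ S → c - b ∈ S → c - a ∈ S → False := by
    intro a b c h1 h2 ha hb hc hba hcb hca
    have e1 : (b - a).val = b.val - a.val := ZMod.val_sub (le_of_lt h1)
    have e2 : (c - b).val = c.val - b.val := ZMod.val_sub (le_of_lt h2)
    have e3 : (c - a).val = c.val - a.val := ZMod.val_sub (by omega)
    have hcn := ZMod.val_lt c
    rw [hPz] at ha hb hc hba hcb hca
    rw [e1] at hba; rw [e2] at hcb; rw [e3] at hca
    exact pcore k a.val b.val c.val hk ha hb hc h1 h2 (by omega) hba hcb hca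
  have hval_inj : ∀ u v : ZMod n, u.val = v.val → u = v := by
    intro u v h; rw [← hvalid u, ← hvalid v, h]
  -- K4-freeness
  have hfree : (cayley S).CliqueFree 4 := by
    intro t ht
    obtain ⟨hclique, hcard⟩ := ht
    obtain ⟨p, hp⟩ := Finset.card_pos.mp (by omega : 0 < t.card)
    have hcard3 : (t.erase p).card = 3 := by rw [Finset.card_erase_of_mem hp, hcard]
    obtain ⟨q, r, s, hqr, hqs, hrs, herase⟩ := Finset.card_eq_three.mp hcard3
    have hq : q ∈ t.erase p := by rw [herase]; simp
    have hr : r ∈ t.erase p := by rw [herase]; simp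
    have hs : s ∈ t.erase p := by rw [herase]; simp
    have hqp := Finset.ne_of_mem_erase hq
    have hrp := Finset.ne_of_mem_erase hr
    have hsp := Finset.ne_of_mem_erase hs
    have hqt := Finset.mem_of_mem_erase hq
    have hrt := Finset.mem_of_mem_erase hr
    have hst := Finset.mem_of_mem_erase hs
    have ha : q - p ∈ S := (hadj q p).1 (hclique hqt hp hqp)
    have hb : r - p ∈ S := (hadj r p).1 (hclique hrt hp hrp)
    have hc : s - p ∈ S := (hadj s p).1 (hclique hst hp hsp)
    have hba : (r - p) - (q - p) ∈ S := by
      have : r - q ∈ S := (hadj r q).1 (hclique hrt hqt (Ne.symm hqr))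
      rwa [show (r - p) - (q - p) = r - q by ring]
    have hcb : (s - p) - (r - p) ∈ S := by
      have : s - r ∈ S := (hadj s r).1 (hclique hst hrt (Ne.symm hrs))
      rwa [show (s - p) - (r - p) = s - r by ring]
    have hca : (s - p) - (q - p) ∈ S := by
      have : s - q ∈ S := (hadj s q).1 (hclique hst hqt (Ne.symm hqs))
      rwa [show (s - p) - (q - p) = s - q by ring]
    set a := q - p with hadef
    set b := r - p with hbdef
    set c := s - p with hcdef
    have hab' : a - b ∈ S := by have := hsymm _ hba; rwa [neg_sub] at this
    have hbc' : b - c ∈ S := by have := hsymm _ hcb; rwa [neg_sub] at this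
    have hac' : a - c ∈ S := by have := hsymm _ hca; rwa [neg_sub] at this
    have hvab : a.val ≠ b.val := by
      intro h; have := hval_inj _ _ h
      exact hqr (by rwa [hadef, hbdef, sub_left_inj] at this)
    have hvbc : b.val ≠ c.val := by
      intro h; have := hval_inj _ _ h
      exact hrs (by rwa [hbdef, hcdef, sub_left_inj] at this)
    have hvac : a.val ≠ c.val := by
      intro h; have := hval_inj _ _ h
      exact hqs (by rwa [hadef, hcdef, sub_left_inj] at this)
    rcases lt_trichotomy a.val b.val with h1 | h1 | h1
    · rcases lt_trichotomy b.val c.val with h2 | h2 | h2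
      · exact core a b c h1 h2 ha hb hc hba hcb hca
      · exact hvbc h2
      · rcases lt_trichotomy a.val c.val with h3 | h3 | h3
        · exact core a c b h3 h2 ha hc hb hca hbc' hba
        · exact hvac h3
        · exact core c a b h3 h1 hc ha hb hac' hba hbc'
    · exact hvab h1
    · rcases lt_trichotomy a.val c.val with h2 | h2 | h2
      · exact core b a c h1 h2 hb ha hc hab' hca hcb
      · exact hvac h2
      · rcases lt_trichotomy b.val c.val with h3 | h3 | h3
        · exact core b c a h3 h2 hb hc ha hcb hac' hab'
        · exact hvbc h3
        · exact core c b a h3 h1 hc hb ha hbc' hab' hac'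
  -- cardinality of S
  have hScard : S.ncard = 2*k+2 := by
    classical
    set F : Finset ℕ := ((Finset.Ico 1 k).image fun j => 5*j+1) ∪
        (((Finset.Ico 1 k).image fun j => 5*j+3) ∪ {1, 2, 5*k+2, 5*k+3}) with hF
    have hFmem : ∀ m, m ∈ F ↔ (m < n ∧ Pk k m) := by
      intro m
      simp only [hF, Finset.mem_union, Finset.mem_image, Finset.mem_Ico, Finset.mem_insert,
        Finset.mem_singleton]
      constructor
      · rintro (⟨j, hj, rfl⟩ | ⟨j, hj, rfl⟩ | h)
        · exact ⟨by omega, by unfold Pk; omega⟩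
        · exact ⟨by omega, by unfold Pk; omega⟩
        · exact ⟨by omega, by unfold Pk; omega⟩
      · rintro ⟨hmn, hm⟩
        unfold Pk at hm
        rcases hm with rfl | rfl | rfl | rfl | ⟨h6, hle, hmod⟩
        · exact Or.inr (Or.inr (Or.inl rfl))
        · exact Or.inr (Or.inr (Or.inr (Or.inl rfl)))
        · exact Or.inr (Or.inr (Or.inr (Or.inr (Or.inl rfl))))
        · exact Or.inr (Or.inr (Or.inr (Or.inr (Or.inr rfl))))
        · rcases hmod with h1 | h3
          · exact Or.inl ⟨m / 5, ⟨by omega, by omega⟩, by omega⟩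
          · exact Or.inr (Or.inl ⟨m / 5, ⟨by omega, by omega⟩, by omega⟩)
    have hinj1 : Function.Injective (fun j : ℕ => 5*j+1) := by
      intro a b h; simp only [] at h; omega
    have hinj3 : Function.Injective (fun j : ℕ => 5*j+3) := by
      intro a b h; simp only [] at h; omega
    have h4 : ({1, 2, 5*k+2, 5*k+3} : Finset ℕ).card = 4 := by
      rw [Finset.card_insert_of_notMem
          (by simp only [Finset.mem_insert, Finset.mem_singleton]; omega),
        Finset.card_insert_of_notMem
          (by simp only [Finset.mem_insert, Finset.mem_singleton]; omega),
        Finset.card_insert_of_notMem (by simp only [Finset.mem_singleton]; omega),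
        Finset.card_singleton]
    have hd1 : Disjoint ((Finset.Ico 1 k).image fun j => 5*j+1)
        (((Finset.Ico 1 k).image fun j => 5*j+3) ∪ {1, 2, 5*k+2, 5*k+3}) := by
      rw [Finset.disjoint_left]
      intro a ha hb
      simp only [Finset.mem_image, Finset.mem_Ico] at ha
      simp only [Finset.mem_union, Finset.mem_image, Finset.mem_Ico, Finset.mem_insert,
        Finset.mem_singleton] at hb
      obtain ⟨j, hj, rfl⟩ := ha
      rcases hb with ⟨j', hj', he⟩ | h
      · omega
      · omega
    have hd2 : Disjoint ((Finset.Ico 1 k).image fun j => 5*j+3)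
        ({1, 2, 5*k+2, 5*k+3} : Finset ℕ) := by
      rw [Finset.disjoint_left]
      intro a ha hb
      simp only [Finset.mem_image, Finset.mem_Ico] at ha
      simp only [Finset.mem_insert, Finset.mem_singleton] at hb
      obtain ⟨j, hj, rfl⟩ := ha
      omega
    have hcardF : F.card = 2*k+2 := by
      rw [hF, Finset.card_union_of_disjoint hd1, Finset.card_union_of_disjoint hd2,
        Finset.card_image_of_injective _ hinj1, Finset.card_image_of_injective _ hinj3,
        Nat.card_Ico, h4]
      omega
    have hinjOn : Set.InjOn (fun m : ℕ => (m : ZMod n)) ↑F := by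
      intro a ha b hb h
      rw [Finset.mem_coe, hFmem] at ha hb
      have := congrArg ZMod.val h
      rwa [ZMod.val_cast_of_lt ha.1, ZMod.val_cast_of_lt hb.1] at this
    have hsetF : S = (fun m : ℕ => (m : ZMod n)) '' ↑F := by
      rw [hset]
      have he : {m : ℕ | m < n ∧ Pk k m} = (↑F : Set ℕ) := by
        ext m
        simp only [Set.mem_setOf_eq, Finset.mem_coe, hFmem m]
      rw [he]
    rw [hsetF, Set.ncard_image_of_injOn hinjOn, Set.ncard_coe_finset, hcardF]
  -- regularity
  have hreg : isRegular (cayley S) (2*k+2) := by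
    intro z
    have hnbhd : (cayley S).neighborSet z = (fun s => z - s) '' S := by
      ext w
      simp only [SimpleGraph.mem_neighborSet, Set.mem_image]
      rw [hadj]
      constructor
      · intro h; exact ⟨z - w, h, by ring⟩
      · rintro ⟨s, hs, rfl⟩; rwa [sub_sub_cancel]
    rw [hnbhd, Set.ncard_image_of_injective _ sub_right_injective, hScard]
  refine ⟨⟨hfree, ?_⟩, hreg, by simp [hn]⟩
  -- saturation
  intro x y hxy hnadj
  have hd0 : y - x ≠ 0 := sub_ne_zero.mpr (Ne.symm hxy)
  have hdS : y - x ∉ S := by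
    intro h
    have := hsymm _ h; rw [neg_sub] at this
    exact hnadj ((hadj x y).2 this)
  set d := y - x with hd
  set r := d.val with hr
  have hrn : r < n := ZMod.val_lt d
  have hdr : d = ((r : ℕ) : ZMod n) := (hvalid d).symm
  have hr0 : r ≠ 0 := fun h => hd0 ((ZMod.val_eq_zero d).mp h)
  have hPr : ¬ Pk k r := fun h => hdS (by rw [hdr]; exact hmemcast r hrn h)
  have hcases : r = 3 ∨ r = 4 ∨ r = 5 ∨ (r % 5 = 2 ∧ 7 ≤ r ∧ r ≤ 5*k-3) ∨
      (r % 5 = 4 ∧ 9 ≤ r ∧ r ≤ 5*k-6) ∨ r = 5*k-1 ∨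
      (r % 5 = 0 ∧ 10 ≤ r ∧ r ≤ 5*k) ∨ r = 5*k+1 := by
    unfold Pk at hPr; omega
  obtain ⟨u, v, hu, hv, hud, hvd, huv⟩ :
      ∃ u v : ZMod n, u ∈ S ∧ v ∈ S ∧ u - d ∈ S ∧ v - d ∈ S ∧ u - v ∈ S := by
    rcases hcases with h | h | h | h | h | h | h | h
    · -- r = 3
      refine ⟨((1:ℕ) : ZMod n), ((2:ℕ) : ZMod n),
        hmemcast 1 (by omega) (by unfold Pk; omega),
        hmemcast 2 (by omega) (by unfold Pk; omega), ?_, ?_, ?_⟩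
      · rw [hdr, ← hcast_eq 1]; exact key (1+n) r (by omega) (by omega) (by unfold Pk; omega)
      · rw [hdr, ← hcast_eq 2]; exact key (2+n) r (by omega) (by omega) (by unfold Pk; omega)
      · rw [← hcast_eq 1]; exact key (1+n) 2 (by omega) (by omega) (by unfold Pk; omega)
    · -- r = 4
      refine ⟨((6:ℕ) : ZMod n), ((n-2:ℕ) : ZMod n),
        hmemcast 6 (by omega) (by unfold Pk; omega),
        hmemcast (n-2) (by omega) (by unfold Pk; omega), ?_, ?_, ?_⟩
      · rw [hdr]; exact key 6 r (by omega) (by omega) (by unfold Pk; omega)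
      · rw [hdr]; exact key (n-2) r (by omega) (by omega) (by unfold Pk; omega)
      · rw [← hcast_eq 6]; exact key (6+n) (n-2) (by omega) (by omega) (by unfold Pk; omega)
    · -- r = 5
      refine ⟨((13:ℕ) : ZMod n), ((11:ℕ) : ZMod n),
        hmemcast 13 (by omega) (by unfold Pk; omega),
        hmemcast 11 (by omega) (by unfold Pk; omega), ?_, ?_, ?_⟩
      · rw [hdr]; exact key 13 r (by omega) (by omega) (by unfold Pk; omega)
      · rw [hdr]; exact key 11 r (by omega) (by omega) (by unfold Pk; omega)
      · exact key 13 11 (by omega) (by omega) (by unfold Pk; omega)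
    · -- r = 5j+2
      refine ⟨((r-1:ℕ) : ZMod n), ((r+1:ℕ) : ZMod n),
        hmemcast (r-1) (by omega) (by unfold Pk; omega),
        hmemcast (r+1) (by omega) (by unfold Pk; omega), ?_, ?_, ?_⟩
      · rw [hdr, ← hcast_eq (r-1)]
        exact key (r-1+n) r (by omega) (by omega) (by unfold Pk; omega)
      · rw [hdr]; exact key (r+1) r (by omega) (by omega) (by unfold Pk; omega)
      · rw [← hcast_eq (r-1)]
        exact key (r-1+n) (r+1) (by omega) (by omega) (by unfold Pk; omega)
    · -- r = 5j+4, 9 ≤ r ≤ 5k-6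
      refine ⟨((r+2:ℕ) : ZMod n), ((n-2:ℕ) : ZMod n),
        hmemcast (r+2) (by omega) (by unfold Pk; omega),
        hmemcast (n-2) (by omega) (by unfold Pk; omega), ?_, ?_, ?_⟩
      · rw [hdr]; exact key (r+2) r (by omega) (by omega) (by unfold Pk; omega)
      · rw [hdr]; exact key (n-2) r (by omega) (by omega) (by unfold Pk; omega)
      · rw [← hcast_eq (r+2)]
        exact key (r+2+n) (n-2) (by omega) (by omega) (by unfold Pk; omega)
    · -- r = 5k-1
      refine ⟨((n-13:ℕ) : ZMod n), ((n-11:ℕ) : ZMod n),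
        hmemcast (n-13) (by omega) (by unfold Pk; omega),
        hmemcast (n-11) (by omega) (by unfold Pk; omega), ?_, ?_, ?_⟩
      · rw [hdr, ← hcast_eq (n-13)]
        exact key (n-13+n) r (by omega) (by omega) (by unfold Pk; omega)
      · rw [hdr, ← hcast_eq (n-11)]
        exact key (n-11+n) r (by omega) (by omega) (by unfold Pk; omega)
      · rw [← hcast_eq (n-13)]
        exact key (n-13+n) (n-11) (by omega) (by omega) (by unfold Pk; omega)
    · -- r = 5j, 10 ≤ r ≤ 5k
      refine ⟨((2:ℕ) : ZMod n), ((r-2:ℕ) : ZMod n),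
        hmemcast 2 (by omega) (by unfold Pk; omega),
        hmemcast (r-2) (by omega) (by unfold Pk; omega), ?_, ?_, ?_⟩
      · rw [hdr, ← hcast_eq 2]; exact key (2+n) r (by omega) (by omega) (by unfold Pk; omega)
      · rw [hdr, ← hcast_eq (r-2)]
        exact key (r-2+n) r (by omega) (by omega) (by unfold Pk; omega)
      · rw [← hcast_eq 2]; exact key (2+n) (r-2) (by omega) (by omega) (by unfold Pk; omega)
    · -- r = 5k+1
      refine ⟨((n-1:ℕ) : ZMod n), ((n-2:ℕ) : ZMod n),
        hmemcast (n-1) (by omega) (by unfold Pk; omega),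
        hmemcast (n-2) (by omega) (by unfold Pk; omega), ?_, ?_, ?_⟩
      · rw [hdr]; exact key (n-1) r (by omega) (by omega) (by unfold Pk; omega)
      · rw [hdr]; exact key (n-2) r (by omega) (by omega) (by unfold Pk; omega)
      · exact key (n-1) (n-2) (by omega) (by omega) (by unfold Pk; omega)
  -- build the K4
  intro hcf
  have hu0 : u ≠ 0 := fun h => h0 (h ▸ hu)
  have hv0 : v ≠ 0 := fun h => h0 (h ▸ hv)
  have huvne : u ≠ v := fun h => h0 (by rw [h, sub_self] at huv; exact huv)
  have hxu : x ≠ x + u := fun h => hu0 (by rwa [left_eq_add] at h)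
  have hxv : x ≠ x + v := fun h => hv0 (by rwa [left_eq_add] at h)
  have hyu : y ≠ x + u := by
    intro h
    apply hdS
    have h2 : d = u := by rw [hd, h]; ring
    rw [h2]; exact hu
  have hyv : y ≠ x + v := by
    intro h
    apply hdS
    have h2 : d = v := by rw [hd, h]; ring
    rw [h2]; exact hv
  have huv' : x + u ≠ x + v := fun h => huvne (by rwa [add_right_inj] at h)
  have A1 : (cayley S ⊔ SimpleGraph.fromEdgeSet {s(x, y)}).Adj x y := by
    right
    simp [SimpleGraph.fromEdgeSet_adj, hxy]
  have mk : ∀ a b : ZMod n, a - b ∈ S →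
      (cayley S ⊔ SimpleGraph.fromEdgeSet {s(x, y)}).Adj a b := by
    intro a b h; left; exact (hadj a b).2 h
  have A2 : (cayley S ⊔ SimpleGraph.fromEdgeSet {s(x, y)}).Adj x (x + u) := by
    apply mk
    have := hsymm _ hu
    rwa [show x - (x + u) = -u by ring]
  have A3 : (cayley S ⊔ SimpleGraph.fromEdgeSet {s(x, y)}).Adj x (x + v) := by
    apply mk
    have := hsymm _ hv
    rwa [show x - (x + v) = -v by ring]
  have A4 : (cayley S ⊔ SimpleGraph.fromEdgeSet {s(x, y)}).Adj y (x + u) := by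
    apply mk
    have := hsymm _ hud
    rwa [show y - (x + u) = -(u - d) by rw [hd]; ring]
  have A5 : (cayley S ⊔ SimpleGraph.fromEdgeSet {s(x, y)}).Adj y (x + v) := by
    apply mk
    have := hsymm _ hvd
    rwa [show y - (x + v) = -(v - d) by rw [hd]; ring]
  have A6 : (cayley S ⊔ SimpleGraph.fromEdgeSet {s(x, y)}).Adj (x + u) (x + v) := by
    apply mk
    rwa [show (x + u) - (x + v) = u - v by ring]
  apply hcf {x, y, x + u, x + v}
  constructor
  · intro a ha b hb hab
    simp only [Finset.coe_insert, Set.mem_insert_iff, Finset.coe_singleton,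
      Set.mem_singleton_iff] at ha hb
    rcases ha with rfl | rfl | rfl | rfl <;> rcases hb with rfl | rfl | rfl | rfl <;>
      first
        | exact absurd rfl hab
        | exact A1 | exact A1.symm | exact A2 | exact A2.symm | exact A3 | exact A3.symm
        | exact A4 | exact A4.symm | exact A5 | exact A5.symm | exact A6 | exact A6.symm
  · rw [Finset.card_insert_of_notMem (by simp [hxy, hxu, hxv]),
      Finset.card_insert_of_notMem (by simp [hyu, hyv]),
      Finset.card_insert_of_notMem (by simp [huv']), Finset.card_singleton]
end

section
/- Let k ≥ 3, n = 5k + 4, and S = {1, 2, n-1, n-2} ∪ {x : 6 ≤ x ≤ 5(k-1)+3 and x ≡ 1 or 3 (mod 5)} ⊆ ℤ/nℤ. Then for every x ∈ ℤ/nℤ with x ∉ S ∪ {0}, there exist y, z ∈ S with y adjacent to z in Cay(ℤ/nℤ, S) (i.e., y - z ∈ S) such that x - y ∈ S and x - z ∈ S. -/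
theorem stmt14 (k n : ℕ) (hk : 3 ≤ k) (hn : n = 5 * k + 4)
    (S : Set (ZMod n))
    (hS : S = ({1, 2, -1, -2} : Set (ZMod n)) ∪
      (fun x : ℕ => (x : ZMod n)) ''
        {x | 6 ≤ x ∧ x ≤ 5 * (k - 1) + 3 ∧ (x % 5 = 1 ∨ x % 5 = 3)}) :
    ∀ x : ZMod n, x ∉ S ∪ {0} →
      ∃ y ∈ S, ∃ z ∈ S, y - z ∈ S ∧ x - y ∈ S ∧ x - z ∈ S := by
  intro x hx
  haveI : NeZero n := ⟨by omega⟩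
  have h0 : ((5 * k + 4 : ℕ) : ZMod n) = 0 := by rw [← hn]; exact ZMod.natCast_self n
  push_cast at h0
  -- membership lemmas
  have memBig : ∀ a : ℕ, 6 ≤ a → a ≤ 5 * k - 2 → (a % 5 = 1 ∨ a % 5 = 3) →
      ((a : ℕ) : ZMod n) ∈ S := by
    intro a h1 h2 h3
    rw [hS]; right; exact ⟨a, ⟨h1, by omega, h3⟩, rfl⟩
  have mem1 : (1 : ZMod n) ∈ S := by rw [hS]; left; simp
  have mem2 : (2 : ZMod n) ∈ S := by rw [hS]; left; simp
  have memN1 : (-1 : ZMod n) ∈ S := by rw [hS]; left; simp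
  have memN2 : (-2 : ZMod n) ∈ S := by rw [hS]; left; simp
  have hneg : ∀ s ∈ S, -s ∈ S := by
    intro s hs
    rw [hS] at hs
    rcases hs with hs | ⟨a, ⟨h1, h2, h3⟩, rfl⟩
    · simp only [Set.mem_insert_iff, Set.mem_singleton_iff] at hs
      rcases hs with rfl | rfl | rfl | rfl
      · exact memN1
      · exact memN2
      · rw [neg_neg]; exact mem1
      · rw [neg_neg]; exact mem2
    · have he : -(((a : ℕ) : ZMod n)) = ((n - a : ℕ) : ZMod n) := by
        rw [Nat.cast_sub (by omega), ZMod.natCast_self]; ring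
      rw [he]
      exact memBig (n - a) (by omega) (by omega) (by omega)
  -- set up the representative
  set m := x.val with hmdef
  have hmlt : m < n := x.val_lt
  have hxm : ((m : ℕ) : ZMod n) = x := ZMod.natCast_rightInverse x
  -- non-membership constraints
  have hne0 : m ≠ 0 := by
    intro h; exact hx (Or.inr (by rw [← hxm, h]; simp))
  have hne1 : m ≠ 1 := by
    intro h; exact hx (Or.inl (by rw [← hxm, h]; push_cast; exact mem1))
  have hne2 : m ≠ 2 := by
    intro h; exact hx (Or.inl (by rw [← hxm, h]; push_cast; exact mem2))
  have hneN1 : m ≠ n - 1 := by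
    intro h
    refine hx (Or.inl ?_)
    rw [← hxm, h, Nat.cast_sub (by omega), ZMod.natCast_self]
    rw [(by ring : (0 : ZMod n) - ((1:ℕ) : ZMod n) = -((1:ℕ):ZMod n))]
    push_cast; exact memN1
  have hneN2 : m ≠ n - 2 := by
    intro h
    refine hx (Or.inl ?_)
    rw [← hxm, h, Nat.cast_sub (by omega), ZMod.natCast_self]
    rw [(by ring : (0 : ZMod n) - ((2:ℕ) : ZMod n) = -((2:ℕ):ZMod n))]
    push_cast; exact memN2
  have hbig : ¬(6 ≤ m ∧ m ≤ 5 * k - 2 ∧ (m % 5 = 1 ∨ m % 5 = 3)) := by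
    intro h
    exact hx (Or.inl (by rw [← hxm]; exact memBig m h.1 h.2.1 h.2.2))
  have hcase : m = 3 ∨ m = 4 ∨ m = 5 ∨ m = 9 ∨ m = 5 * k + 1 ∨ m = 5 * k - 1 ∨
      (m % 5 = 0 ∧ 10 ≤ m ∧ m ≤ 5 * k) ∨ (m % 5 = 2 ∧ 7 ≤ m ∧ m ≤ 5 * k - 3) ∨
      (m % 5 = 4 ∧ 14 ≤ m ∧ m ≤ 5 * k - 6) := by omega
  clear hbig hne0 hne1 hne2 hneN1 hneN2 hx hS
  rcases hcase with h | h | h | h | h | h | ⟨h5, hlo, hhi⟩ | ⟨h5, hlo, hhi⟩ | ⟨h5, hlo, hhi⟩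
  · -- m = 3 : y = 1, z = 2
    refine ⟨1, mem1, 2, mem2, ?_, ?_, ?_⟩
    · rw [(by ring : (1 : ZMod n) - 2 = -1)]; exact memN1
    · rw [show x - (1 : ZMod n) = 2 by rw [← hxm, h]; push_cast; ring]; exact mem2
    · rw [show x - (2 : ZMod n) = 1 by rw [← hxm, h]; push_cast; ring]; exact mem1
  · -- m = 4 : y = 6, z = -2
    refine ⟨((6:ℕ) : ZMod n), memBig 6 (by omega) (by omega) (by omega),
      -2, memN2, ?_, ?_, ?_⟩
    · rw [show ((6:ℕ) : ZMod n) - (-2) = ((8:ℕ) : ZMod n) by push_cast; ring]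
      exact memBig 8 (by omega) (by omega) (by omega)
    · rw [show x - ((6:ℕ) : ZMod n) = -2 by rw [← hxm, h]; push_cast; ring]; exact memN2
    · rw [show x - (-2 : ZMod n) = ((6:ℕ) : ZMod n) by rw [← hxm, h]; push_cast; ring]
      exact memBig 6 (by omega) (by omega) (by omega)
  · -- m = 5 : y = 11, z = 13
    refine ⟨((11:ℕ) : ZMod n), memBig 11 (by omega) (by omega) (by omega),
      ((13:ℕ) : ZMod n), memBig 13 (by omega) (by omega) (by omega), ?_, ?_, ?_⟩
    · rw [show ((11:ℕ) : ZMod n) - ((13:ℕ) : ZMod n) = -2 by push_cast; ring]; exact memN2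
    · rw [show x - ((11:ℕ) : ZMod n) = -((6:ℕ) : ZMod n) by rw [← hxm, h]; push_cast; ring]
      exact hneg _ (memBig 6 (by omega) (by omega) (by omega))
    · rw [show x - ((13:ℕ) : ZMod n) = -((8:ℕ) : ZMod n) by rw [← hxm, h]; push_cast; ring]
      exact hneg _ (memBig 8 (by omega) (by omega) (by omega))
  · -- m = 9 : y = 11, z = -2
    refine ⟨((11:ℕ) : ZMod n), memBig 11 (by omega) (by omega) (by omega),
      -2, memN2, ?_, ?_, ?_⟩
    · rw [show ((11:ℕ) : ZMod n) - (-2) = ((13:ℕ) : ZMod n) by push_cast; ring]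
      exact memBig 13 (by omega) (by omega) (by omega)
    · rw [show x - ((11:ℕ) : ZMod n) = -2 by rw [← hxm, h]; push_cast; ring]; exact memN2
    · rw [show x - (-2 : ZMod n) = ((11:ℕ) : ZMod n) by rw [← hxm, h]; push_cast; ring]
      exact memBig 11 (by omega) (by omega) (by omega)
  · -- m = 5k+1 : y = -1, z = -2
    refine ⟨-1, memN1, -2, memN2, ?_, ?_, ?_⟩
    · rw [(by ring : (-1 : ZMod n) - (-2) = 1)]; exact mem1
    · rw [show x - (-1 : ZMod n) = -2 by rw [← hxm, h]; push_cast; linear_combination h0]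
      exact memN2
    · rw [show x - (-2 : ZMod n) = -1 by rw [← hxm, h]; push_cast; linear_combination h0]
      exact memN1
  · -- m = 5k-1 : y = -11, z = -13
    refine ⟨-((11:ℕ) : ZMod n), hneg _ (memBig 11 (by omega) (by omega) (by omega)),
      -((13:ℕ) : ZMod n), hneg _ (memBig 13 (by omega) (by omega) (by omega)), ?_, ?_, ?_⟩
    · rw [show -((11:ℕ) : ZMod n) - (-((13:ℕ) : ZMod n)) = 2 by push_cast; ring]; exact mem2
    · rw [show x - (-((11:ℕ) : ZMod n)) = ((6:ℕ) : ZMod n) by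
        rw [← hxm, h]; push_cast [Nat.cast_sub (show 1 ≤ 5 * k by omega)]
        linear_combination h0]
      exact memBig 6 (by omega) (by omega) (by omega)
    · rw [show x - (-((13:ℕ) : ZMod n)) = ((8:ℕ) : ZMod n) by
        rw [← hxm, h]; push_cast [Nat.cast_sub (show 1 ≤ 5 * k by omega)]
        linear_combination h0]
      exact memBig 8 (by omega) (by omega) (by omega)
  · -- m ≡ 0 mod 5, 10 ≤ m ≤ 5k : y = 2, z = m - 2
    refine ⟨2, mem2, ((m - 2 : ℕ) : ZMod n), memBig (m - 2) (by omega) (by omega) (by omega),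
      ?_, ?_, ?_⟩
    · rw [show (2 : ZMod n) - ((m - 2 : ℕ) : ZMod n) = -((m - 4 : ℕ) : ZMod n) by
        push_cast [Nat.cast_sub (show 2 ≤ m by omega), Nat.cast_sub (show 4 ≤ m by omega)]
        ring]
      exact hneg _ (memBig (m - 4) (by omega) (by omega) (by omega))
    · rw [show x - (2 : ZMod n) = ((m - 2 : ℕ) : ZMod n) by
        rw [← hxm]; push_cast [Nat.cast_sub (show 2 ≤ m by omega)]; ring]
      exact memBig (m - 2) (by omega) (by omega) (by omega)
    · rw [show x - ((m - 2 : ℕ) : ZMod n) = 2 by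
        rw [← hxm]; push_cast [Nat.cast_sub (show 2 ≤ m by omega)]; ring]
      exact mem2
  · -- m ≡ 2 mod 5, 7 ≤ m ≤ 5k-3 : y = 1, z = -1
    refine ⟨1, mem1, -1, memN1, ?_, ?_, ?_⟩
    · rw [(by ring : (1 : ZMod n) - (-1) = 2)]; exact mem2
    · rw [show x - (1 : ZMod n) = ((m - 1 : ℕ) : ZMod n) by
        rw [← hxm]; push_cast [Nat.cast_sub (show 1 ≤ m by omega)]; ring]
      exact memBig (m - 1) (by omega) (by omega) (by omega)
    · rw [show x - (-1 : ZMod n) = ((m + 1 : ℕ) : ZMod n) by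
        rw [← hxm]; push_cast; ring]
      exact memBig (m + 1) (by omega) (by omega) (by omega)
  · -- m ≡ 4 mod 5, 14 ≤ m ≤ 5k-6 : y = m + 2, z = m - 6
    refine ⟨((m + 2 : ℕ) : ZMod n), memBig (m + 2) (by omega) (by omega) (by omega),
      ((m - 6 : ℕ) : ZMod n), memBig (m - 6) (by omega) (by omega) (by omega), ?_, ?_, ?_⟩
    · rw [show ((m + 2 : ℕ) : ZMod n) - ((m - 6 : ℕ) : ZMod n) = ((8:ℕ) : ZMod n) by
        push_cast [Nat.cast_sub (show 6 ≤ m by omega)]; ring]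
      exact memBig 8 (by omega) (by omega) (by omega)
    · rw [show x - ((m + 2 : ℕ) : ZMod n) = -2 by rw [← hxm]; push_cast; ring]
      exact memN2
    · rw [show x - ((m - 6 : ℕ) : ZMod n) = ((6:ℕ) : ZMod n) by
        rw [← hxm]; push_cast [Nat.cast_sub (show 6 ≤ m by omega)]; ring]
      exact memBig 6 (by omega) (by omega) (by omega)
end

section
/- Let n = 10k + 7 for an integer k ≥ 1 and S = {±(2ℓ+1) : 0 ≤ ℓ ≤ k} ⊆ ℤ/nℤ (i.e., ±1, ±3, …, ±(2k+1)). Then every element of ℤ/nℤ \ (S ∪ {0}) can be written as s₁ + s₂ + s₃ + s₄ with sᵢ ∈ S such that no consecutive sub-sum s_i + ⋯ + s_j (1 ≤ i < j ≤ 4) is 0, and 0 is not a sum of 5 elements of S. -/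
lemma aux_notzero (k n : ℕ) (hn : n = 10 * k + 7) (m : ℤ) (h0 : m ≠ 0)
    (hb : |m| ≤ 8 * k + 4) : (m : ZMod n) ≠ 0 := by
  rw [Ne, ZMod.intCast_zmod_eq_zero_iff_dvd]
  intro hdvd
  have h1 : (n : ℤ) ∣ |m| := (dvd_abs _ _).mpr hdvd
  have h2 : (n : ℤ) ≤ |m| := Int.le_of_dvd (abs_pos.mpr h0) h1
  have h3 := abs_le.mp hb
  rcases abs_cases m with ⟨hA, _⟩ | ⟨hA, _⟩ <;> omega

lemma aux_memS (k n : ℕ) (S : Set (ZMod n))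
    (hS : S = {x | ∃ ℓ ≤ k, x = ((2 * ℓ + 1 : ℕ) : ZMod n) ∨
      x = -((2 * ℓ + 1 : ℕ) : ZMod n)})
    (m : ℤ) (hm : Odd m) (h0 : m ≠ 0) (hb : |m| ≤ 2 * k + 1) :
    (m : ZMod n) ∈ S := by
  obtain ⟨j, hj⟩ := hm
  have hb' := abs_le.mp hb
  rw [hS]
  rcases lt_or_gt_of_ne h0 with hneg | hpos
  · refine ⟨(-j - 1).toNat, by omega, Or.inr ?_⟩
    have hm2 : m = -(2 * (((-j - 1).toNat : ℕ) : ℤ) + 1) := by omega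
    rw [hm2]; push_cast; ring
  · refine ⟨j.toNat, by omega, Or.inl ?_⟩
    have hm2 : m = 2 * ((j.toNat : ℕ) : ℤ) + 1 := by omega
    rw [hm2]; push_cast; ring

lemma aux_sub {G : Type*} [AddCommGroup G] (w x y z : G)
    (h01 : w + x ≠ 0) (h12 : x + y ≠ 0) (h23 : y + z ≠ 0)
    (h02 : w + x + y ≠ 0) (h13 : x + y + z ≠ 0) (h03 : w + x + y + z ≠ 0) :
    ∀ i j : Fin 4, i < j → ∑ t ∈ Finset.Icc i j, (![w, x, y, z]) t ≠ 0 := by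
  intro i j hij
  fin_cases i <;> fin_cases j <;>
    simp_all [show Finset.Icc (0 : Fin 4) 1 = {0, 1} from by decide,
      show Finset.Icc (0 : Fin 4) 2 = {0, 1, 2} from by decide,
      show Finset.Icc (0 : Fin 4) 3 = {0, 1, 2, 3} from by decide,
      show Finset.Icc (1 : Fin 4) 2 = {1, 2} from by decide,
      show Finset.Icc (1 : Fin 4) 3 = {1, 2, 3} from by decide,
      show Finset.Icc (2 : Fin 4) 3 = {2, 3} from by decide,
      Finset.sum_insert, Finset.mem_insert, add_assoc]

lemma aux_key (k n : ℕ) (hn : n = 10 * k + 7) (S : Set (ZMod n))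
    (hS : S = {x | ∃ ℓ ≤ k, x = ((2 * ℓ + 1 : ℕ) : ZMod n) ∨
      x = -((2 * ℓ + 1 : ℕ) : ZMod n)})
    (a b c d : ℤ) (oa : Odd a) (ob : Odd b) (oc : Odd c) (od : Odd d)
    (ba : |a| ≤ 2 * k + 1) (bb : |b| ≤ 2 * k + 1) (bc : |c| ≤ 2 * k + 1)
    (bd : |d| ≤ 2 * k + 1)
    (h01 : a + b ≠ 0) (h12 : b + c ≠ 0) (h23 : c + d ≠ 0)
    (h03 : a + b + c + d ≠ 0) :
    ((a + b + c + d : ℤ) : ZMod n) ∈ Rset 4 S := by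
  obtain ⟨pa, hpa⟩ := oa
  obtain ⟨pb, hpb⟩ := ob
  obtain ⟨pc, hpc⟩ := oc
  obtain ⟨pd, hpd⟩ := od
  have ba' := abs_le.mp ba
  have bb' := abs_le.mp bb
  have bc' := abs_le.mp bc
  have bd' := abs_le.mp bd
  have h02 : a + b + c ≠ 0 := by omega
  have h13 : b + c + d ≠ 0 := by omega
  have cast2 : ∀ u v : ℤ, u + v ≠ 0 → |u| ≤ 2 * k + 1 → |v| ≤ 2 * k + 1 →
      (u : ZMod n) + (v : ZMod n) ≠ 0 := by
    intro u v h hu hv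
    have := aux_notzero k n hn (u + v) h (by
      have := abs_le.mp hu; have := abs_le.mp hv
      rw [abs_le]; omega)
    push_cast at this; exact this
  have cast3 : ∀ u v w : ℤ, u + v + w ≠ 0 → |u| ≤ 2 * k + 1 → |v| ≤ 2 * k + 1 →
      |w| ≤ 2 * k + 1 → (u : ZMod n) + (v : ZMod n) + (w : ZMod n) ≠ 0 := by
    intro u v w h hu hv hw
    have := aux_notzero k n hn (u + v + w) h (by
      have := abs_le.mp hu; have := abs_le.mp hv; have := abs_le.mp hw
      rw [abs_le]; omega)
    push_cast at this; exact this
  have cast4 : ((a : ZMod n)) + b + c + d ≠ 0 := by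
    have := aux_notzero k n hn (a + b + c + d) h03 (by rw [abs_le]; omega)
    push_cast at this; exact this
  have z01 := cast2 a b h01 ba bb
  have z12 := cast2 b c h12 bb bc
  have z23 := cast2 c d h23 bc bd
  have z02 := cast3 a b c h02 ba bb bc
  have z13 := cast3 b c d h13 bb bc bd
  have hne : ∀ m : ℤ, Odd m → m ≠ 0 := by rintro m ⟨r, rfl⟩; omega
  refine ⟨![(a : ZMod n), (b : ZMod n), (c : ZMod n), (d : ZMod n)], ?_, ?_, ?_⟩
  · intro i
    fin_cases i
    · exact aux_memS k n S hS a ⟨pa, hpa⟩ (hne a ⟨pa, hpa⟩) ba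
    · exact aux_memS k n S hS b ⟨pb, hpb⟩ (hne b ⟨pb, hpb⟩) bb
    · exact aux_memS k n S hS c ⟨pc, hpc⟩ (hne c ⟨pc, hpc⟩) bc
    · exact aux_memS k n S hS d ⟨pd, hpd⟩ (hne d ⟨pd, hpd⟩) bd
  · exact aux_sub _ _ _ _ z01 z12 z23 z02 z13 cast4
  · rw [Fin.sum_univ_four]
    simp only [Matrix.cons_val_zero, Matrix.cons_val_one, Matrix.head_cons,
      Matrix.cons_val_two, Matrix.tail_cons, Matrix.cons_val_three]
    push_cast; ring

lemma aux_split (k : ℕ) (m : ℤ) (he : Even m) (h2 : 2 ≤ m) (hb : m ≤ 4 * k + 2) :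
    ∃ p q : ℤ, Odd p ∧ Odd q ∧ 1 ≤ p ∧ 1 ≤ q ∧ p ≤ 2 * k + 1 ∧ q ≤ 2 * k + 1 ∧
      p + q = m := by
  obtain ⟨h, hh⟩ := he
  rcases Int.even_or_odd h with ⟨r, hr⟩ | ⟨r, hr⟩
  · exact ⟨h + 1, h - 1, ⟨r, by omega⟩, ⟨r - 1, by omega⟩, by omega, by omega,
      by omega, by omega, by omega⟩
  · exact ⟨h, h, ⟨r, by omega⟩, ⟨r, by omega⟩, by omega, by omega, by omega,
      by omega, by omega⟩

lemma aux_quad (k : ℕ) (hk : 1 ≤ k) (t : ℤ) (he : Even t) (h2 : 2 ≤ t)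
    (hb : t ≤ 8 * k + 4) :
    ∃ a b c d : ℤ, Odd a ∧ Odd b ∧ Odd c ∧ Odd d ∧
      |a| ≤ 2 * k + 1 ∧ |b| ≤ 2 * k + 1 ∧ |c| ≤ 2 * k + 1 ∧ |d| ≤ 2 * k + 1 ∧
      a + b ≠ 0 ∧ b + c ≠ 0 ∧ c + d ≠ 0 ∧ a + b + c + d = t := by
  obtain ⟨e, he'⟩ := he
  by_cases ht2 : t = 2
  · exact ⟨3, 1, 1, -3, ⟨1, by norm_num⟩, ⟨0, by norm_num⟩, ⟨0, by norm_num⟩,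
      ⟨-2, by norm_num⟩, by rw [abs_le]; omega, by rw [abs_le]; omega,
      by rw [abs_le]; omega, by rw [abs_le]; omega, by omega, by omega,
      by omega, by omega⟩
  · set u : ℤ := if t ≤ 4 * k + 4 then t - 2 else 4 * k + 2 with hu
    have huE : Even u := by
      rw [hu]; split_ifs
      · exact ⟨e - 1, by omega⟩
      · exact ⟨2 * k + 1, by ring⟩
    have hu2 : 2 ≤ u := by rw [hu]; split_ifs <;> omega
    have hub : u ≤ 4 * k + 2 := by rw [hu]; split_ifs <;> omega
    have hwE : Even (t - u) := by
      rw [hu]; split_ifs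
      · exact ⟨1, by omega⟩
      · exact ⟨e - 2 * k - 1, by omega⟩
    have hw2 : 2 ≤ t - u := by rw [hu]; split_ifs <;> omega
    have hwb : t - u ≤ 4 * k + 2 := by rw [hu]; split_ifs <;> omega
    obtain ⟨p, q, op, oq, p1, q1, pk, qk, hpq⟩ := aux_split k u huE hu2 hub
    obtain ⟨p', q', op', oq', p1', q1', pk', qk', hpq'⟩ :=
      aux_split k (t - u) hwE hw2 hwb
    exact ⟨p, q, p', q', op, oq, op', oq',
      by rw [abs_le]; omega, by rw [abs_le]; omega,
      by rw [abs_le]; omega, by rw [abs_le]; omega,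
      by omega, by omega, by omega, by omega⟩

lemma aux_main4 (k n : ℕ) (hk : 1 ≤ k) (hn : n = 10 * k + 7) (S : Set (ZMod n))
    (hS : S = {x | ∃ ℓ ≤ k, x = ((2 * ℓ + 1 : ℕ) : ZMod n) ∨
      x = -((2 * ℓ + 1 : ℕ) : ZMod n)})
    (t : ℤ) (he : Even t) (h0 : t ≠ 0) (hb : |t| ≤ 8 * k + 4) :
    ((t : ZMod n)) ∈ Rset 4 S := by
  obtain ⟨hbl, hbr⟩ := abs_le.mp hb
  obtain ⟨e0, he0⟩ := id he
  rcases lt_or_gt_of_ne h0 with hneg | hpos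
  · obtain ⟨a, b, c, d, oa, ob, oc, od, ba, bb, bc, bd, h01, h12, h23, hsum⟩ :=
      aux_quad k hk (-t) he.neg (by omega) (by omega)
    have key := aux_key k n hn S hS (-a) (-b) (-c) (-d) oa.neg ob.neg oc.neg od.neg
      (by rwa [abs_neg]) (by rwa [abs_neg]) (by rwa [abs_neg]) (by rwa [abs_neg])
      (by omega) (by omega) (by omega) (by omega)
    have : (-a) + (-b) + (-c) + (-d) = t := by omega
    rwa [this] at key
  · obtain ⟨a, b, c, d, oa, ob, oc, od, ba, bb, bc, bd, h01, h12, h23, hsum⟩ :=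
      aux_quad k hk t he (by omega) (by omega)
    have key := aux_key k n hn S hS a b c d oa ob oc od ba bb bc bd
      h01 h12 h23 (by omega)
    rwa [hsum] at key

theorem stmt16 (k n : ℕ) (hk : 1 ≤ k) (hn : n = 10 * k + 7)
    (S : Set (ZMod n))
    (hS : S = {x | ∃ ℓ ≤ k, x = ((2 * ℓ + 1 : ℕ) : ZMod n) ∨
      x = -((2 * ℓ + 1 : ℕ) : ZMod n)}) :
    (∀ x : ZMod n, x ∉ S ∪ {0} → x ∈ Rset 4 S) ∧
      (0 : ZMod n) ∉ foldSum 5 S := by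
  haveI : NeZero n := ⟨by omega⟩
  constructor
  · intro x hx
    simp only [Set.mem_union, Set.mem_singleton_iff, not_or] at hx
    obtain ⟨hxS, hx0⟩ := hx
    have hvx : ((x.val : ℕ) : ZMod n) = x := ZMod.natCast_rightInverse x
    set v := x.val with hv
    have hvlt : v < n := ZMod.val_lt x
    have hv0 : v ≠ 0 := by
      intro h; apply hx0; rw [← hvx, h]; simp
    have hxcast : x = ((v : ℤ) : ZMod n) := by rw [← hvx]; push_cast; rfl
    have hxcast' : x = ((((v : ℤ) - (n : ℤ) : ℤ)) : ZMod n) := by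
      rw [← hvx]; push_cast; simp [ZMod.natCast_self]
    rcases Nat.even_or_odd v with ⟨e, hev⟩ | ⟨e, hod⟩
    · by_cases hle : v ≤ 8 * k + 4
      · rw [hxcast]
        exact aux_main4 k n hk hn S hS (v : ℤ) ⟨(e : ℤ), by omega⟩
          (by omega) (by rw [abs_le]; omega)
      · exfalso; apply hxS
        rw [hxcast']
        exact aux_memS k n S hS ((v : ℤ) - n) ⟨(e : ℤ) - 5 * k - 4, by omega⟩
          (by omega) (by rw [abs_le]; omega)
    · by_cases hle : v ≤ 2 * k + 1
      · exfalso; apply hxS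
        rw [hxcast]
        exact aux_memS k n S hS (v : ℤ) ⟨(e : ℤ), by omega⟩
          (by omega) (by rw [abs_le]; omega)
      · rw [hxcast']
        exact aux_main4 k n hk hn S hS ((v : ℤ) - n) ⟨(e : ℤ) - 5 * k - 3, by omega⟩
          (by omega) (by rw [abs_le]; omega)
  · rintro ⟨s, hsS, hsum⟩
    have hrep : ∀ i, ∃ m : ℤ, Odd m ∧ |m| ≤ 2 * k + 1 ∧ s i = (m : ZMod n) := by
      intro i
      obtain ⟨ℓ, hℓ, hcase⟩ := by rw [hS] at hsS; exact hsS i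
      rcases hcase with h | h
      · exact ⟨2 * (ℓ : ℤ) + 1, ⟨ℓ, rfl⟩, by rw [abs_le]; omega,
          by rw [h]; push_cast; ring⟩
      · exact ⟨-(2 * (ℓ : ℤ) + 1), ⟨-(ℓ : ℤ) - 1, by ring⟩, by rw [abs_le]; omega,
          by rw [h]; push_cast; ring⟩
    choose m hodd hbd hcast using hrep
    have hsum' : ((∑ i, m i : ℤ) : ZMod n) = 0 := by
      rw [← hsum]; push_cast
      exact (Finset.sum_congr rfl (fun i _ => hcast i)).symm
    rw [ZMod.intCast_zmod_eq_zero_iff_dvd] at hsum'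
    have h5 : ∑ i, m i = m 0 + m 1 + m 2 + m 3 + m 4 := Fin.sum_univ_five m
    obtain ⟨w0, hw0⟩ := hodd 0
    obtain ⟨w1, hw1⟩ := hodd 1
    obtain ⟨w2, hw2⟩ := hodd 2
    obtain ⟨w3, hw3⟩ := hodd 3
    obtain ⟨w4, hw4⟩ := hodd 4
    have hne : (∑ i, m i) ≠ 0 := by omega
    have hdvd : (n : ℤ) ∣ |∑ i, m i| := (dvd_abs _ _).mpr hsum'
    have hle := Int.le_of_dvd (abs_pos.mpr hne) hdvd
    have b0 := abs_le.mp (hbd 0)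
    have b1 := abs_le.mp (hbd 1)
    have b2 := abs_le.mp (hbd 2)
    have b3 := abs_le.mp (hbd 3)
    have b4 := abs_le.mp (hbd 4)
    rcases abs_cases (∑ i, m i) with ⟨hA, _⟩ | ⟨hA, _⟩ <;> rw [hA] at hle <;> omega
end

section
/- Let α ≥ 1 and n = 2α(α+4)k + 2α + 5 for k ≥ 1, with S = {±(2αℓ+1) : 0 ≤ ℓ ≤ k} ⊆ ℤ/nℤ. Then for every j with 1 ≤ j ≤ α, the element 2j of ℤ/nℤ can be written as a sum of 2α+2 elements of S, namely (α+1-j) copies of -(2α+1), then 2j copies of 1, then (α+1-j) copies of (2α+1), and no consecutive sub-sum of this ordered sum is 0 in ℤ/nℤ. -/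
/-- The integer-valued sequence underlying `s`, parametrized by `A = α+1-j` and `j`. -/
def stmt17g (A j t : ℕ) : ℤ :=
  if t < A then -(2*A+2*j-1) else if t < A + 2*j then 1 else (2*A+2*j-1)

/-- Prefix sums of `stmt17g`. -/
def stmt17F (A j m : ℕ) : ℤ := ∑ t ∈ Finset.range m, stmt17g A j t

lemma stmt17F_eq (A j : ℕ) (hA : 1 ≤ A) (hj : 1 ≤ j) (m : ℕ) :
    stmt17F A j m =
      if m ≤ A then -(2*(A:ℤ)+2*j-1)*m
      else if m ≤ A + 2*j then -(2*(A:ℤ)+2*j-1)*A + ((m:ℤ) - A)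
      else -(2*(A:ℤ)+2*j-1)*A + 2*j + (2*(A:ℤ)+2*j-1)*((m:ℤ) - A - 2*j) := by
  induction m with
  | zero => simp [stmt17F]
  | succ m ih =>
    rw [stmt17F, Finset.sum_range_succ, ← stmt17F, ih, stmt17g]
    rcases lt_or_ge m A with h1 | h1
    · rw [if_pos h1, if_pos (by omega : m ≤ A), if_pos (by omega : m + 1 ≤ A)]
      push_cast; ring
    · rcases lt_or_ge m (A + 2*j) with h2 | h2
      · rw [if_neg (by omega : ¬ m < A), if_pos h2,
          if_neg (by omega : ¬ m + 1 ≤ A), if_pos (by omega : m + 1 ≤ A + 2*j)]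
        rcases eq_or_lt_of_le h1 with h3 | h3
        · rw [if_pos (by omega : m ≤ A)]
          have h' : (m:ℤ) = A := by omega
          push_cast; rw [h']; ring
        · rw [if_neg (by omega : ¬ m ≤ A), if_pos (by omega : m ≤ A + 2*j)]
          push_cast; ring
      · rw [if_neg (by omega : ¬ m < A), if_neg (by omega : ¬ m < A + 2*j),
          if_neg (by omega : ¬ m + 1 ≤ A), if_neg (by omega : ¬ m + 1 ≤ A + 2*j),
          if_neg (by omega : ¬ m ≤ A)]
        rcases eq_or_lt_of_le h2 with h3 | h3
        · rw [if_pos (by omega : m ≤ A + 2*j)]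
          have h' : (m:ℤ) = A + 2*j := by omega
          push_cast; rw [h']; ring
        · rw [if_neg (by omega : ¬ m ≤ A + 2*j)]
          push_cast; ring

lemma stmt17F_bounds (A j : ℕ) (hA : 1 ≤ A) (hj : 1 ≤ j) (m : ℕ) (hm : m ≤ 2*A + 2*j) :
    -(2*(A:ℤ)+2*j-1)*A ≤ stmt17F A j m ∧ stmt17F A j m ≤ 2*j := by
  have hc0 : (0:ℤ) ≤ 2*(A:ℤ)+2*j-1 := by omega
  rw [stmt17F_eq A j hA hj]
  split_ifs with h1 h2
  · constructor
    · have := mul_le_mul_of_nonneg_left (show (m:ℤ) ≤ A by omega) hc0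
      nlinarith
    · nlinarith [mul_nonneg hc0 (show (0:ℤ) ≤ m by positivity)]
  · constructor
    · omega
    · nlinarith [mul_nonneg hc0 (show (0:ℤ) ≤ A by positivity)]
  · constructor
    · nlinarith [mul_nonneg hc0 (show (0:ℤ) ≤ (m:ℤ) - A - 2*j by omega)]
    · have := mul_le_mul_of_nonneg_left (show (m:ℤ) - A - 2*j ≤ A by omega) hc0
      nlinarith

lemma stmt17F_ne (A j : ℕ) (hA : 1 ≤ A) (hj : 1 ≤ j) (p m : ℕ)
    (hpm : p < m) (hm : m ≤ 2*A + 2*j) : stmt17F A j m ≠ stmt17F A j p := by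
  have hc : (2*j:ℤ) < 2*(A:ℤ)+2*j-1 := by omega
  have hc0 : (0:ℤ) ≤ 2*(A:ℤ)+2*j-1 := by omega
  rw [stmt17F_eq A j hA hj, stmt17F_eq A j hA hj]
  intro h
  split_ifs at h with h1 h2 h3 h4 h5 h6 h7 h8 h9
  -- enumerate cases; in each, derive a contradiction
  all_goals try omega
  all_goals first
    | -- same region: -c*m = -c*p or c*(m-...)=c*(p-...)
      (have h2' : (2*(A:ℤ)+2*j-1) * ((m:ℤ) - p) = 0 := by
        first | linear_combination h | linear_combination -h
       rcases mul_eq_zero.1 h2' with h' | h' <;> omega)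
    | -- middle-middle: m = p
      (have h2' : (m:ℤ) = p := by linear_combination h
       omega)
    | -- A < m ≤ A+2j, p ≤ A : (m-A) = c*(A-p)
      (have h2' : ((m:ℤ) - A) = (2*(A:ℤ)+2*j-1) * ((A:ℤ) - p) := by
        linear_combination h
       rcases eq_or_lt_of_le (show (p:ℤ) ≤ A by omega) with h' | h'
       · rw [← h'] at h2'; simp at h2'; omega
       · have := mul_le_mul_of_nonneg_left (show (1:ℤ) ≤ (A:ℤ) - p by omega) hc0
         nlinarith)
    | -- m > A+2j, p ≤ A : 2j = c*(2A+2j-p-m)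
      (have h2' : (2*(j:ℤ)) = (2*(A:ℤ)+2*j-1) * (2*(A:ℤ)+2*j - p - m) := by
        linear_combination h
       rcases le_or_gt (2*(A:ℤ)+2*j - p - m) 0 with h' | h'
       · nlinarith [mul_nonneg hc0 (show (0:ℤ) ≤ (p:ℤ) + m - 2*A - 2*j by omega)]
       · have := mul_le_mul_of_nonneg_left
           (show (1:ℤ) ≤ 2*(A:ℤ)+2*j - p - m by omega) hc0
         nlinarith)
    | -- m > A+2j, A < p ≤ A+2j : (p-A) = 2j + c*(m-A-2j)
      (have h2' : ((p:ℤ) - A) = 2*(j:ℤ) + (2*(A:ℤ)+2*j-1) * ((m:ℤ) - A - 2*j) := by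
        linear_combination -h
       have := mul_le_mul_of_nonneg_left (show (1:ℤ) ≤ (m:ℤ) - A - 2*j by omega) hc0
       nlinarith)

theorem stmt17 (α k n : ℕ) (hα : 1 ≤ α) (hk : 1 ≤ k)
    (hn : n = 2 * α * (α + 4) * k + 2 * α + 5)
    (S : Set (ZMod n))
    (hS : S = {x | ∃ ℓ ≤ k, x = ((2 * α * ℓ + 1 : ℕ) : ZMod n) ∨
      x = -((2 * α * ℓ + 1 : ℕ) : ZMod n)})
    (j : ℕ) (hj1 : 1 ≤ j) (hj2 : j ≤ α)
    (s : Fin (2 * α + 2) → ZMod n)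
    (hs : s = fun i =>
      if i.val < α + 1 - j then -((2 * α + 1 : ℕ) : ZMod n)
      else if i.val < α + 1 - j + 2 * j then ((1 : ℕ) : ZMod n)
      else ((2 * α + 1 : ℕ) : ZMod n)) :
    (∀ i, s i ∈ S) ∧ (∑ i, s i = ((2 * j : ℕ) : ZMod n)) ∧
      ∀ i i' : Fin (2 * α + 2), i < i' → ∑ t ∈ Finset.Icc i i', s t ≠ 0 := by
  set A : ℕ := α + 1 - j with hAdef
  have hA1 : 1 ≤ A := by omega
  have hAj : A + j = α + 1 := by omega
  have hcℤ : (2*(A:ℤ)+2*j-1) = 2*(α:ℤ)+1 := by omega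
  have hglue : ∀ t : Fin (2*α+2), s t = ((stmt17g A j t.val : ℤ) : ZMod n) := by
    intro t
    rw [hs, stmt17g]
    have hcond2 : (t.val < α + 1 - j + 2*j) ↔ (t.val < A + 2*j) := by omega
    simp only [← hAdef]
    split_ifs with h1 h2 h3 h4 <;> try omega
    · rw [hcℤ]; push_cast; ring
    · push_cast; ring
    · rw [hcℤ]; push_cast; ring
  refine ⟨?_, ?_, ?_⟩
  · -- membership
    intro i
    rw [hS, hs]
    simp only [Set.mem_setOf_eq]
    split_ifs with h1 h2
    · exact ⟨1, hk, Or.inr (by norm_num)⟩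
    · exact ⟨0, Nat.zero_le k, Or.inl (by norm_num)⟩
    · exact ⟨1, hk, Or.inl (by norm_num)⟩
  · -- total sum
    have : ∑ i, s i = ((stmt17F A j (2*α+2) : ℤ) : ZMod n) := by
      rw [stmt17F]
      push_cast [← Fin.sum_univ_eq_sum_range (fun t => ((stmt17g A j t : ℤ) : ZMod n)) (2*α+2)]
      exact Finset.sum_congr rfl fun t _ => hglue t
    rw [this, stmt17F_eq A j hA1 hj1]
    have h1 : ¬ (2*α+2 ≤ A) := by omega
    have h2 : ¬ (2*α+2 ≤ A + 2*j) := by omega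
    rw [if_neg h1, if_neg h2]
    have : -(2*(A:ℤ)+2*↑j-1)*↑A + 2*↑j + (2*↑A+2*↑j-1) * ((2*α+2:ℕ) - ↑A - 2*↑j)
        = ((2*j : ℕ) : ℤ) := by
      have : ((2*α+2:ℕ):ℤ) - (A:ℤ) - 2*(j:ℤ) = (A:ℤ) := by omega
      rw [this]; push_cast; ring
    rw [this]
    push_cast
    ring
  · -- consecutive sub-sums
    intro i i' hii' hzero
    have hNe : NeZero n := ⟨by omega⟩
    have hIcc : ∑ t ∈ Finset.Icc i i', s t
        = ((stmt17F A j (i'.val + 1) - stmt17F A j i.val : ℤ) : ZMod n) := by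
      have h1 : ∑ t ∈ Finset.Icc i i', s t
          = ∑ t ∈ Finset.Icc i.val i'.val, ((stmt17g A j t : ℤ) : ZMod n) := by
        rw [← Fin.map_valEmbedding_Icc, Finset.sum_map]
        exact Finset.sum_congr rfl fun t _ => hglue t
      have h2 : stmt17F A j (i'.val + 1) - stmt17F A j i.val
          = ∑ t ∈ Finset.Icc i.val i'.val, stmt17g A j t := by
        rw [← Finset.Ico_add_one_right_eq_Icc,
          Finset.sum_Ico_eq_sub _ (by omega : i.val ≤ i'.val + 1)]
        rfl
      rw [h1, h2]
      push_cast
      rfl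
    rw [hIcc, ZMod.intCast_zmod_eq_zero_iff_dvd] at hzero
    have hm : i'.val + 1 ≤ 2*A + 2*j := by have := i'.isLt; omega
    have hne := stmt17F_ne A j hA1 hj1 i.val (i'.val+1) (by omega) hm
    have hb1 := stmt17F_bounds A j hA1 hj1 (i'.val+1) hm
    have hb2 := stmt17F_bounds A j hA1 hj1 i.val (by omega)
    have habs : |stmt17F A j (i'.val + 1) - stmt17F A j i.val|
        ≤ (2*(A:ℤ)+2*j-1)*A + 2*j := by
      rw [abs_le]; constructor <;> nlinarith [hb1.1, hb1.2, hb2.1, hb2.2]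
    have hnℤ : (n:ℤ) = 2*α*(α+4)*k + 2*α+5 := by exact_mod_cast congrArg (Nat.cast : ℕ → ℤ) hn
    have hlt : (2*(A:ℤ)+2*j-1)*A + 2*j < (n:ℤ) := by
      have hAle : (A:ℤ) ≤ α := by omega
      have hk' : (1:ℤ) ≤ k := by exact_mod_cast hk
      have hα' : (1:ℤ) ≤ α := by exact_mod_cast hα
      nlinarith [mul_le_mul_of_nonneg_left hAle (show (0:ℤ) ≤ 2*(A:ℤ)+2*j-1 by omega),
        mul_nonneg (mul_nonneg (show (0:ℤ) ≤ 2*α by omega) (show (0:ℤ) ≤ (α:ℤ)+4 by omega))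
          (show (0:ℤ) ≤ (k:ℤ)-1 by omega)]
    have := Int.eq_zero_of_abs_lt_dvd hzero (lt_of_le_of_lt habs hlt)
    exact hne (by linarith [this, sub_eq_zero.1 this])
end
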